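/- arXiv:2203.01625 — 9 statements merged into one kernel-verified Lean document; each statement's English description precedes it below -/
import Mathlib

section
/- Let X₁ and X₂ be nonempty Hausdorff topological spaces such that the product X₁ × X₂ is a k_ℝ-space (i.e., every function to ℝ that is continuous on each compact subset is continuous). Then X₂ is a k_ℝ-space. -/
/-- A Hausdorff topological space `X` is a `k_ℝ`-space if every real-valued function
on `X` that is continuous on all compact subsets is continuous. -/
def IsKRSpace (X : Type*) [TopologicalSpace X] : Prop :=
  ∀ f : X → ℝ, (∀ K : Set X, IsCompact K → ContinuousOn f K) → Continuous f

/-- If `X₁` and `X₂` are nonempty Hausdorff spaces and `X₁ × X₂` is a `k_ℝ`-space,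
then `X₂` is a `k_ℝ`-space. -/
theorem krSpace_of_prod_krSpace {X₁ X₂ : Type*} [TopologicalSpace X₁] [TopologicalSpace X₂]
    [T2Space X₁] [T2Space X₂] [Nonempty X₁] [Nonempty X₂]
    (h : IsKRSpace (X₁ × X₂)) : IsKRSpace X₂ := by
  intro f hf
  obtain ⟨x₀⟩ := (inferInstance : Nonempty X₁)
  have hg : Continuous (fun p : X₁ × X₂ => f p.2) := by
    apply h
    intro K hK
    have h2 : IsCompact (Prod.snd '' K) := hK.image continuous_snd
    exact (hf _ h2).comp continuous_snd.continuousOn (fun p hp => ⟨p, hp, rfl⟩)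
  have : f = (fun p : X₁ × X₂ => f p.2) ∘ (fun x => (x₀, x)) := rfl
  rw [this]
  exact hg.comp (Continuous.prodMk_right x₀)
end

section
/- Every open subset U of a completely regular k_ℝ-space X is itself a k_ℝ-space in the induced topology. -/
open Set Topology Filter

theorem IsKRSpace.of_abs_le_one {Y : Type*} [TopologicalSpace Y]
    (h : ∀ f : Y → ℝ, (∀ y, |f y| ≤ 1) →
      (∀ K : Set Y, IsCompact K → ContinuousOn f K) → Continuous f) :
    IsKRSpace Y := by
  intro f hf
  let e : ℝ ≃ₜ Ioo (-1 : ℝ) 1 := (orderIsoIooNegOneOne ℝ).toHomeomorph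
  have he : Continuous fun y => (e (f y) : ℝ) :=
    h _ (fun y => abs_le.2 ⟨(e (f y)).2.1.le, (e (f y)).2.2.le⟩) fun K hK =>
      continuous_subtype_val.comp_continuousOn (e.continuous.comp_continuousOn (hf K hK))
  exact e.comp_continuous_iff.1 (he.subtype_mk _)

section

variable {X : Type*} [TopologicalSpace X] {U : Set X}

theorem continuousOn_of_isCompact_subset_of_comp_val {Y : Type*} [TopologicalSpace Y] {F : X → Y}
    (hF : ∀ K : Set U, IsCompact K → ContinuousOn (F ∘ (↑)) K)
    {S : Set X} (hS : IsCompact S) (hSU : S ⊆ U) : ContinuousOn F S := by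
  have hS' : IsCompact ((↑) ⁻¹' S : Set U) :=
    IsInducing.subtypeVal.isCompact_preimage' hS (by simpa using hSU)
  simpa [inter_eq_right.2 hSU] using IsInducing.subtypeVal.continuousOn_image_iff.2 (hF _ hS')

theorem continuousOn_mul_of_support_subset {φ F : X → ℝ} {M : ℝ} (hφ : Continuous φ)
    (hφU : Function.support φ ⊆ U) (hFM : ∀ x, |F x| ≤ M)
    (hF : ∀ K : Set U, IsCompact K → ContinuousOn (F ∘ (↑)) K)
    {K : Set X} (hK : IsCompact K) : ContinuousOn (φ * F) K := by
  intro k hk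
  by_cases hk0 : φ k = 0
  · have hsmall : Tendsto (fun x => M * |φ x|) (𝓝[K] k) (𝓝 0) := by
      simpa [hk0] using ((hφ.abs.const_mul M).tendsto k).mono_left nhdsWithin_le_nhds
    refine (squeeze_zero_norm (fun x => ?_) hsmall).trans (by simp [hk0])
    simpa [abs_mul, mul_comm] using mul_le_mul_of_nonneg_left (hFM x) (abs_nonneg (φ x))
  · set S := K ∩ {x | |φ k| / 2 ≤ |φ x|}
    have hk_pos : 0 < |φ k| := abs_pos.2 hk0
    have hSK : S ∈ 𝓝[K] k :=
      inter_mem_nhdsWithin K (hφ.abs.continuousAt.preimage_mem_nhds (Ici_mem_nhds (by linarith)))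
    have hSU : S ⊆ U := fun x hx =>
      hφU (abs_pos.1 (lt_of_lt_of_le (half_pos hk_pos) hx.2))
    have hS : IsCompact S := hK.inter_right (isClosed_le continuous_const hφ.abs)
    exact ((hφ.continuousOn.mul (continuousOn_of_isCompact_subset_of_comp_val hF hS hSU)) k
      ⟨hk, show |φ k| / 2 ≤ |φ k| by linarith⟩).mono_of_mem_nhdsWithin hSK

theorem ContinuousAt.of_mul_left {𝕜 : Type*} [Field 𝕜] [TopologicalSpace 𝕜] [T1Space 𝕜]
    [ContinuousInv₀ 𝕜] [ContinuousMul 𝕜] {φ F : X → 𝕜} {x : X} (hφF : ContinuousAt (φ * F) x)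
    (hφ : ContinuousAt φ x) (hx : φ x ≠ 0) : ContinuousAt F x :=
  (hφF.div hφ hx).congr <| (hφ.eventually_ne hx).mono fun y hy => by
    simp [mul_div_cancel_left₀ _ hy]

end

theorem isKRSpace_of_isOpen_general {X : Type*} [TopologicalSpace X]
    [CompletelyRegularSpace X] (hX : IsKRSpace X) (U : Set X) (hU : IsOpen U) :
    IsKRSpace U := by
  classical
  refine IsKRSpace.of_abs_le_one fun f hf1 hf => continuous_iff_continuousAt.2 fun x₀ => ?_
  obtain ⟨ψ, hψ, hψx₀, hψU⟩ :=
    CompletelyRegularSpace.completely_regular_isOpen (x₀ : X) U hU x₀.2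
  let φ : X → ℝ := fun x => 1 - ψ x
  have hφ : Continuous φ := continuous_const.sub (continuous_subtype_val.comp hψ)
  have hφU : Function.support φ ⊆ U := fun x hx => by
    by_contra hxU
    exact hx (by simp [φ, hψU hxU])
  let F : X → ℝ := fun x => if h : x ∈ U then f ⟨x, h⟩ else 0
  have hFf : F ∘ (↑) = f := funext fun x => dif_pos x.2
  have hF1 : ∀ x, |F x| ≤ 1 := fun x => by
    by_cases hx : x ∈ U <;> simp [F, hx, hf1]
  have hφF : Continuous (φ * F) :=
    hX _ fun K hK => continuousOn_mul_of_support_subset hφ hφU hF1 (hFf ▸ hf) hK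
  have hFx₀ : ContinuousAt F x₀ :=
    hφF.continuousAt.of_mul_left hφ.continuousAt (by simp [φ, hψx₀])
  exact hFf ▸ hFx₀.comp continuous_subtype_val.continuousAt

/-- Every open subset of a completely regular (Hausdorff) `k_ℝ`-space is a `k_ℝ`-space
in the induced topology. -/
theorem isKRSpace_of_isOpen {X : Type*} [TopologicalSpace X] [T2Space X]
    [CompletelyRegularSpace X] (hX : IsKRSpace X) (U : Set X) (hU : IsOpen U) :
    IsKRSpace U :=
  isKRSpace_of_isOpen_general hX U hU
end

section
/- Let β : E₁ × ⋯ × E_k → F be a k-linear map between topological vector spaces that is c-hypocontinuous in its arguments (j, …, k) for some j ∈ {2, …, k}, let X be a k_ℝ-space, and let f : X → E₁ × ⋯ × E_k be continuous. Then β ∘ f : X → F is continuous. -/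
/-!
Write `β (a, b)` with `a` the first `j - 1` arguments and `b` the others. Since `F` is locally
convex, composing with gauges reduces continuity of `β ∘ f` on the `k_ℝ`-space `X` to continuity
on each compact `K`. There `b` stays in the compact set `M = b (f K)`, on which c-hypocontinuity
makes the multilinear maps `β (·, b)`, `b ∈ M`, uniformly small near `0`. Expanding
`β (a₀ + (a - a₀), b)` multilinearly and rescaling each term so that its fixed coordinates from
`a₀` become small turns this into `β (a, b) - β (a₀, b) → 0` uniformly on `M` as `a → a₀`,
while `β (a₀, b)` is continuous in `b`.
-/

open Filter Topology

/-- Splicing a tuple indexed by `{i // i < m}` and a tuple indexed by `{i // ¬ i < m}`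
into a full tuple indexed by `Fin k`. -/
def splice {k m : ℕ} {E : Fin k → Type*}
    (a : ∀ i : {i : Fin k // (i : ℕ) < m}, E i.1)
    (b : ∀ i : {i : Fin k // ¬ (i : ℕ) < m}, E i.1) (i : Fin k) : E i :=
  if h : (i : ℕ) < m then a ⟨i, h⟩ else b ⟨i, h⟩

theorem IsKRSpace.continuous_of_continuousOn {X : Type*} [TopologicalSpace X]
    (hX : IsKRSpace X) {F : Type*} [AddCommGroup F] [Module ℝ F] [TopologicalSpace F]
    [IsTopologicalAddGroup F] [ContinuousSMul ℝ F] [LocallyConvexSpace ℝ F] {g : X → F}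
    (hg : ∀ K : Set X, IsCompact K → ContinuousOn g K) : Continuous g := by
  refine continuous_iff_continuousAt.2 fun x₀ => tendsto_def.2 fun U hU => ?_
  have hU₀ : (· + g x₀) ⁻¹' U ∈ 𝓝 (0 : F) :=
    (continuous_add_const (g x₀)).continuousAt.preimage_mem_nhds (by simpa using hU)
  obtain ⟨C, ⟨hC, hCconv⟩, hCU⟩ := (LocallyConvexSpace.convex_basis_zero ℝ F).mem_iff.1 hU₀
  -- The gauge of `C` turns continuity of `g` at `x₀` into continuity of a real function.
  have hgauge : Continuous fun x => gauge C (g x - g x₀) := hX _ fun K hK =>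
    (continuous_gauge hCconv hC).comp_continuousOn ((hg K hK).sub continuousOn_const)
  have hlt : (fun x => gauge C (g x - g x₀)) ⁻¹' Set.Iio 1 ∈ 𝓝 x₀ :=
    hgauge.continuousAt.preimage_mem_nhds (by simpa using Iio_mem_nhds one_pos)
  refine mem_of_superset hlt fun x hx => ?_
  simpa using hCU (setOfPred_gauge_lt_one_subset_self hCconv (mem_of_mem_nhds hC)
    (absorbent_nhds_zero hC) hx)

namespace MultilinearMap

variable {𝕜 ι T F : Type*} [NontriviallyNormedField 𝕜] [Fintype ι] {G : ι → Type*}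
  [∀ i, AddCommGroup (G i)] [∀ i, Module 𝕜 (G i)] [∀ i, TopologicalSpace (G i)]
  [∀ i, ContinuousSMul 𝕜 (G i)] [AddCommGroup F] [Module 𝕜 F] [TopologicalSpace F]
  {γ : T → MultilinearMap 𝕜 G F} {l : Filter T}

theorem tendsto_piecewise_of_tendsto_uncurry_zero
    (hγ : Tendsto (fun p : T × (∀ i, G i) => γ p.1 p.2) (l ×ˢ 𝓝 0) (𝓝 0))
    [DecidableEq ι] {s : Finset ι} (hs : s.Nonempty) (c : ∀ i, G i) :
    Tendsto (fun p : T × (∀ i, G i) => γ p.1 (s.piecewise p.2 c)) (l ×ˢ 𝓝 0) (𝓝 0) := by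
  obtain ⟨i₀, hi₀⟩ := hs
  -- Rescaling by `κ τ` (product `1`) does not change `γ t`, and moves `s.piecewise 0 c` to `0`
  -- as `τ → 0`.
  let κ : 𝕜 → ι → 𝕜 := fun τ i => if i ∈ s then (if i = i₀ then (τ ^ sᶜ.card)⁻¹ else 1) else τ
  let Φ : 𝕜 → (∀ i, G i) → ∀ i, G i := fun τ a i => κ τ i • s.piecewise a c i
  have hΦ_zero : ∀ τ, Φ τ 0 = fun i => if i ∈ s then 0 else τ • c i := by
    intro τ; funext i; by_cases hi : i ∈ s <;> simp [Φ, κ, hi]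
  have hΦ_cont : ∀ τ, Continuous (Φ τ) := fun τ => continuous_pi fun i => by
    by_cases hi : i ∈ s <;> simp only [Φ, Finset.piecewise, hi, if_true, if_false] <;> fun_prop
  have hκ : ∀ τ ≠ 0, ∏ i, κ τ i = 1 := fun τ hτ => by
    rw [Finset.prod_ite]
    simp [Finset.prod_ite_eq', hi₀, Finset.filter_not, ← Finset.compl_eq_univ_sdiff, hτ]
  have hγΦ : ∀ τ ≠ 0, ∀ t a, γ t (Φ τ a) = γ t (s.piecewise a c) := fun τ hτ t a => by
    rw [map_smul_univ, hκ τ hτ, one_smul]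
  refine tendsto_def.2 fun W hW => ?_
  obtain ⟨U, hU, V, hV, hUV⟩ := mem_prod_iff.1 (hγ hW)
  have hsmall : ∀ᶠ τ in 𝓝[≠] (0 : 𝕜), Φ τ 0 ∈ interior V := by
    have hlim : Tendsto (fun τ : 𝕜 => Φ τ 0) (𝓝 0) (𝓝 0) := by
      simp only [hΦ_zero]
      exact Continuous.tendsto' (continuous_pi fun i => by split_ifs <;> fun_prop) _ _
        (by funext i; simp)
    exact (hlim.eventually_mem (interior_mem_nhds.2 hV)).filter_mono nhdsWithin_le_nhds
  obtain ⟨τ, hτV, hτ⟩ := (hsmall.and self_mem_nhdsWithin).exists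
  have hΦV : Φ τ ⁻¹' interior V ∈ 𝓝 0 :=
    (hΦ_cont τ).continuousAt.preimage_mem_nhds (isOpen_interior.mem_nhds hτV)
  filter_upwards [prod_mem_prod hU hΦV] with p hp
  rw [Set.mem_preimage, ← hγΦ τ hτ]
  exact hUV (show (p.1, Φ τ p.2) ∈ U ×ˢ V from ⟨hp.1, interior_subset hp.2⟩)

variable [∀ i, IsTopologicalAddGroup (G i)] [IsTopologicalAddGroup F]

theorem tendsto_sub_of_tendsto_uncurry_zero
    (hγ : Tendsto (fun p : T × (∀ i, G i) => γ p.1 p.2) (l ×ˢ 𝓝 0) (𝓝 0)) (a₀ : ∀ i, G i) :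
    Tendsto (fun p : T × (∀ i, G i) => γ p.1 p.2 - γ p.1 a₀) (l ×ˢ 𝓝 a₀) (𝓝 0) := by
  classical
  have hexpand : ∀ t a, γ t a - γ t a₀ =
      ∑ s ∈ Finset.univ.erase (∅ : Finset ι), γ t (s.piecewise (a - a₀) a₀) := fun t a => by
    conv_lhs => rw [← sub_add_cancel a a₀, map_add_univ,
      ← Finset.add_sum_erase _ _ (Finset.mem_univ ∅), Finset.piecewise_empty]
    exact add_sub_cancel_left _ _
  have hshift : Tendsto (fun p : T × (∀ i, G i) => (p.1, p.2 - a₀)) (l ×ˢ 𝓝 a₀) (l ×ˢ 𝓝 0) :=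
    tendsto_id.prodMap (tendsto_sub_nhds_zero_iff.2 tendsto_id)
  simp only [hexpand]
  rw [← Finset.sum_const_zero (s := Finset.univ.erase (∅ : Finset ι))]
  refine tendsto_finsetSum _ fun s hs => ?_
  exact (tendsto_piecewise_of_tendsto_uncurry_zero hγ
    (Finset.nonempty_iff_ne_empty.2 (Finset.ne_of_mem_erase hs)) a₀).comp hshift

theorem continuousOn_comp_of_tendsto_domDomRestrict_zero {X : Type*} [TopologicalSpace X]
    (β : MultilinearMap 𝕜 G F) (P : ι → Prop) [DecidablePred P]
    {M : Set (∀ i : {i // ¬ P i}, G i)}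
    (hhypo : Tendsto (fun p : (∀ i : {i // ¬ P i}, G i) × (∀ i : {i // P i}, G i) =>
      β.domDomRestrict P p.1 p.2) (𝓟 M ×ˢ 𝓝 0) (𝓝 0))
    (htail : ∀ a, Continuous fun b => β.domDomRestrict P b a)
    {f : X → ∀ i, G i} (hf : Continuous f) {K : Set X}
    (hK : ∀ x ∈ K, (fun i : {i // ¬ P i} => f x i) ∈ M) :
    ContinuousOn (fun x => β (f x)) K := by
  intro x₀ hx₀
  set a : X → ∀ i : {i // P i}, G i := fun x i => f x i
  set b : X → ∀ i : {i // ¬ P i}, G i := fun x i => f x i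
  have hβf : ∀ x, β (f x) = β.domDomRestrict P (b x) (a x) - β.domDomRestrict P (b x) (a x₀)
      + β.domDomRestrict P (b x) (a x₀) := fun x => by
    simp [domDomRestrict_apply, a, b]
  have hab : Tendsto (fun x => (b x, a x)) (𝓝[K] x₀) (𝓟 M ×ˢ 𝓝 (a x₀)) :=
    (tendsto_principal.2 (eventually_mem_nhdsWithin.mono hK)).prodMk
      ((continuous_pi fun i => (continuous_apply _).comp hf).continuousWithinAt)
  have hb : Continuous b := continuous_pi fun i => (continuous_apply _).comp hf
  simp only [ContinuousWithinAt, hβf]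
  simpa using ((tendsto_sub_of_tendsto_uncurry_zero hhypo (a x₀)).comp hab).add
    ((htail (a x₀)).comp hb).continuousWithinAt

end MultilinearMap

theorem continuous_multilinear_comp_of_c_hypocontinuous_general {k : ℕ}
    {E : Fin k → Type*} [∀ i, AddCommGroup (E i)] [∀ i, Module ℝ (E i)]
    [∀ i, TopologicalSpace (E i)] [∀ i, IsTopologicalAddGroup (E i)]
    [∀ i, ContinuousSMul ℝ (E i)]
    {F : Type*} [AddCommGroup F] [Module ℝ F] [TopologicalSpace F]
    [IsTopologicalAddGroup F] [ContinuousSMul ℝ F] [LocallyConvexSpace ℝ F]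
    (β : MultilinearMap ℝ E F) (j : ℕ)
    (htail : ∀ a : ∀ i : {i : Fin k // (i : ℕ) < j - 1}, E i.1,
      Continuous fun b : ∀ i : {i : Fin k // ¬ (i : ℕ) < j - 1}, E i.1 => β (splice a b))
    (hhypo : ∀ M : Set (∀ i : {i : Fin k // ¬ (i : ℕ) < j - 1}, E i.1), IsCompact M →
      ∀ W ∈ 𝓝 (0 : F), ∃ V ∈ 𝓝 (0 : ∀ i : {i : Fin k // (i : ℕ) < j - 1}, E i.1),
        ∀ a ∈ V, ∀ b ∈ M, β (splice a b) ∈ W)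
    {X : Type*} [TopologicalSpace X] (hX : IsKRSpace X)
    (f : X → ∀ i, E i) (hf : Continuous f) :
    Continuous fun x => β (f x) := by
  refine hX.continuous_of_continuousOn fun K hK => ?_
  set M := (fun x (i : {i : Fin k // ¬ (i : ℕ) < j - 1}) => f x i) '' K
  have hM : IsCompact M := hK.image (continuous_pi fun i => (continuous_apply _).comp hf)
  refine β.continuousOn_comp_of_tendsto_domDomRestrict_zero (fun i => (i : ℕ) < j - 1) (M := M)
    (tendsto_def.2 fun W hW => ?_) htail hf fun x hx => Set.mem_image_of_mem _ hx
  obtain ⟨V, hV, hVW⟩ := hhypo M hM W hW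
  exact mem_prod_iff.2 ⟨M, mem_principal_self M, V, hV, fun p hp => hVW p.2 hp.2 p.1 hp.1⟩

/-- Let `β : E₁ × ⋯ × E_k → F` be a `k`-linear map (`k ≥ 2`) between topological vector
spaces which is separately continuous, continuous in the variables `(j,…,k)` for fixed
first `j−1` variables, and `c`-hypocontinuous in its arguments `(j,…,k)` for some
`j ∈ {2,…,k}`.  If `X` is a `k_ℝ`-space and `f : X → E₁ × ⋯ × E_k` is continuous, then
`β ∘ f` is continuous. -/
theorem continuous_multilinear_comp_of_c_hypocontinuous {k : ℕ} (hk : 2 ≤ k)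
    {E : Fin k → Type*} [∀ i, AddCommGroup (E i)] [∀ i, Module ℝ (E i)]
    [∀ i, TopologicalSpace (E i)] [∀ i, IsTopologicalAddGroup (E i)]
    [∀ i, ContinuousSMul ℝ (E i)]
    {F : Type*} [AddCommGroup F] [Module ℝ F] [TopologicalSpace F]
    [IsTopologicalAddGroup F] [ContinuousSMul ℝ F] [LocallyConvexSpace ℝ F]
    (β : MultilinearMap ℝ E F) (j : ℕ) (hj2 : 2 ≤ j) (hjk : j ≤ k)
    (hsep : ∀ (i : Fin k) (x : ∀ i, E i), Continuous fun y : E i => β (Function.update x i y))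
    (htail : ∀ a : ∀ i : {i : Fin k // (i : ℕ) < j - 1}, E i.1,
      Continuous fun b : ∀ i : {i : Fin k // ¬ (i : ℕ) < j - 1}, E i.1 => β (splice a b))
    (hhypo : ∀ M : Set (∀ i : {i : Fin k // ¬ (i : ℕ) < j - 1}, E i.1), IsCompact M →
      ∀ W ∈ 𝓝 (0 : F), ∃ V ∈ 𝓝 (0 : ∀ i : {i : Fin k // (i : ℕ) < j - 1}, E i.1),
        ∀ a ∈ V, ∀ b ∈ M, β (splice a b) ∈ W)
    {X : Type*} [TopologicalSpace X] [T2Space X] (hX : IsKRSpace X)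
    (f : X → ∀ i, E i) (hf : Continuous f) :
    Continuous fun x => β (f x) :=
  continuous_multilinear_comp_of_c_hypocontinuous_general β j htail hhypo hX f hf
end

section
/- Let E, F be locally convex real vector spaces, U ⊆ E open, k ≥ 2, and f : U × E^k → F a map such that f(x, ·) : E^k → F is symmetric k-linear for each x ∈ U. If the map h : U × E → F, h(x, y) = f(x, y, …, y), is continuous, then f is continuous. More generally, if h is C^r then f is C^r. -/
/-! On `U`, `f` agrees with the polarization
`(k!)⁻¹ ∑_{S ⊆ {1,…,k}} (-1)^(k - |S|) h(x, ∑_{i ∈ S} y_i)` of `h` (the `0/1` form of the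
`±1` polarization formula): expanding `f(x, ∑_{i ∈ S} y_i, …, ∑_{i ∈ S} y_i)` multilinearly,
inclusion–exclusion over `S` cancels every term `f(x, y_{r(1)}, …, y_{r(k)})` whose index map `r`
is not surjective, and each of the `k!` permutations `r` contributes `f(x, y)` by symmetry.
The polarization is a linear combination of `h` composed with continuous linear maps, and
Michal–Bastiani `C^r` maps are stable under both operations; as `U` is open, `C^r` passes from
the polarization to `f`. Continuity is the case `r = 0`. -/

open Filter Topology Finset

/-- `HasMBDerivAt f x y v` : the directional (Gâteaux) derivative of `f` at `x` in the
direction `y` exists and equals `v`, in the Michal–Bastiani sense. -/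
def HasMBDerivAt {G F : Type*} [AddCommGroup G] [Module ℝ G] [TopologicalSpace G]
    [AddCommGroup F] [Module ℝ F] [TopologicalSpace F]
    (f : G → F) (x y : G) (v : F) : Prop :=
  Tendsto (fun t : ℝ => t⁻¹ • (f (x + t • y) - f x)) (𝓝[≠] (0 : ℝ)) (𝓝 v)

/-- `ContDiffMB n f U` : the map `f` is `C^n` on the open set `U` in the
Michal–Bastiani sense: there is a family `D k : U × G^k → F` of iterated directional
differentials of `f` (with `D 0 = f`), each of which is continuous on `U × G^k`. -/
def ContDiffMB {G F : Type*} [AddCommGroup G] [Module ℝ G] [TopologicalSpace G]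
    [AddCommGroup F] [Module ℝ F] [TopologicalSpace F]
    (n : ℕ) (f : G → F) (U : Set G) : Prop :=
  ∃ D : ∀ k : ℕ, G × (Fin k → G) → F,
    (∀ x y, D 0 (x, y) = f x) ∧
    (∀ k, k < n → ∀ x ∈ U, ∀ y : Fin (k + 1) → G,
      HasMBDerivAt (fun x' => D k (x', fun i : Fin k => y i.castSucc)) x (y (Fin.last k))
        (D (k + 1) (x, y))) ∧
    (∀ k, k ≤ n → ContinuousOn (D k) (U ×ˢ Set.univ))

namespace Finset

theorem sum_superset_neg_one_pow_card_compl {α R : Type*} [Fintype α] [DecidableEq α]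
    [CommRing R] (T : Finset α) :
    ∑ S with T ⊆ S, (-1 : R) ^ #Sᶜ = if T = univ then 1 else 0 := by
  have hcompl : ∑ S with T ⊆ S, (-1 : R) ^ #Sᶜ = ∑ S ∈ Tᶜ.powerset, (-1 : R) ^ #S := by
    refine sum_nbij' compl compl (fun S hS => ?_) (fun S hS => ?_) (by simp) (by simp) (by simp)
    · simpa using compl_subset_compl.2 (mem_filter.1 hS).2
    · simpa [subset_compl_comm] using hS
  have hint := congrArg (Int.cast : ℤ → R) (sum_powerset_neg_one_pow_card (x := Tᶜ))
  push_cast at hint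
  simpa [hcompl, compl_eq_empty_iff] using hint

theorem sum_surjective_eq_sum_perm {ι M : Type*} [Fintype ι] [DecidableEq ι] [AddCommMonoid M]
    (g : (ι → ι) → M) :
    ∑ r with Function.Surjective r, g r = ∑ σ : Equiv.Perm ι, g σ := by
  symm
  refine sum_bij (fun σ _ => ⇑σ) (fun σ _ => by simpa using σ.surjective)
    (fun σ _ τ _ h => Equiv.coe_fn_injective h) (fun r hr => ?_) (fun _ _ => rfl)
  exact ⟨Equiv.ofBijective r (Finite.surjective_iff_bijective.1 (mem_filter.1 hr).2),
    mem_univ _, rfl⟩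

end Finset

theorem MultilinearMap.polarization {R ι M N : Type*} [CommRing R] [Fintype ι] [DecidableEq ι]
    [AddCommMonoid M] [Module R M] [AddCommMonoid N] [Module R N]
    (B : MultilinearMap R (fun _ : ι => M) N)
    (hB : ∀ (σ : Equiv.Perm ι) (y : ι → M), B (y ∘ σ) = B y) (y : ι → M) :
    ∑ S : Finset ι, (-1 : R) ^ #Sᶜ • B (fun _ => ∑ i ∈ S, y i)
      = (Fintype.card ι).factorial • B y := by
  have expand (S : Finset ι) :
      B (fun _ => ∑ i ∈ S, y i) = ∑ r with image r univ ⊆ S, B (y ∘ r) := by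
    rw [B.map_sum_finset]
    congr 1
    ext r
    simp [Fintype.mem_piFinset, image_subset_iff]
  have surj_iff (r : ι → ι) : image r univ = univ ↔ Function.Surjective r := by
    simp [eq_univ_iff_forall, Function.Surjective]
  calc ∑ S : Finset ι, (-1 : R) ^ #Sᶜ • B (fun _ => ∑ i ∈ S, y i)
      = ∑ r : ι → ι, (∑ S with image r univ ⊆ S, (-1 : R) ^ #Sᶜ) • B (y ∘ r) := by
        simp_rw [expand, smul_sum, sum_smul, sum_filter]
        exact sum_comm
    _ = ∑ r with Function.Surjective r, B (y ∘ r) := by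
        simp_rw [sum_superset_neg_one_pow_card_compl, surj_iff, sum_filter, ite_smul, one_smul,
          zero_smul]
    _ = ∑ σ : Equiv.Perm ι, B (y ∘ σ) := sum_surjective_eq_sum_perm _
    _ = (Fintype.card ι).factorial • B y := by
        simp [hB, Fintype.card_perm]

section MichalBastiani

variable {G G' F : Type*} [AddCommGroup G] [Module ℝ G] [TopologicalSpace G]
  [AddCommGroup G'] [Module ℝ G'] [TopologicalSpace G']
  [AddCommGroup F] [Module ℝ F] [TopologicalSpace F]

theorem hasMBDerivAt_const (c : F) (x y : G) : HasMBDerivAt (fun _ => c) x y 0 := by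
  simpa [HasMBDerivAt] using tendsto_const_nhds

theorem HasMBDerivAt.add [ContinuousAdd F] {f g : G → F} {x y : G} {v w : F}
    (hf : HasMBDerivAt f x y v) (hg : HasMBDerivAt g x y w) :
    HasMBDerivAt (fun x => f x + g x) x y (v + w) :=
  (Tendsto.add hf hg).congr fun t => by simp only [add_sub_add_comm, smul_add]

theorem HasMBDerivAt.const_smul [ContinuousConstSMul ℝ F] {f : G → F} {x y : G} {v : F}
    (c : ℝ) (hf : HasMBDerivAt f x y v) : HasMBDerivAt (fun x => c • f x) x y (c • v) :=
  (Tendsto.const_smul hf c).congr fun t => by simp only [← smul_sub, smul_comm c]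

theorem HasMBDerivAt.comp_linearMap {g : G' → F} (A : G →ₗ[ℝ] G') {x y : G} {v : F}
    (hg : HasMBDerivAt g (A x) (A y) v) : HasMBDerivAt (fun x => g (A x)) x y v := by
  simpa only [HasMBDerivAt, map_add, map_smul] using hg

theorem HasMBDerivAt.congr_of_eventuallyEq [ContinuousAdd G] [ContinuousSMul ℝ G]
    {f g : G → F} {x y : G} {v : F} (hg : HasMBDerivAt g x y v) (hfg : f =ᶠ[𝓝 x] g) :
    HasMBDerivAt f x y v := by
  have hline : Tendsto (fun t : ℝ => x + t • y) (𝓝 0) (𝓝 x) :=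
    Continuous.tendsto' (by fun_prop) 0 x (by simp)
  refine hg.congr' ?_
  filter_upwards [nhdsWithin_le_nhds (hline.eventually hfg)] with t ht
  rw [ht, hfg.eq_of_nhds]

theorem contDiffMB_zero {f : G → F} {U : Set G} : ContDiffMB 0 f U ↔ ContinuousOn f U := by
  constructor
  · rintro ⟨D, hD0, -, hDc⟩
    have := (hDc 0 le_rfl).comp (continuous_id.prodMk continuous_const).continuousOn
      (fun x hx => ⟨hx, Set.mem_univ (Fin.elim0 : Fin 0 → G)⟩)
    exact this.congr fun x _ => (hD0 x _).symm
  · intro hf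
    exact ⟨fun _ p => f p.1, fun _ _ => rfl, fun k hk => absurd hk k.not_lt_zero,
      fun _ _ => hf.comp continuousOn_fst fun _ hp => hp.1⟩

theorem contDiffMB_zero_fun {n : ℕ} {U : Set G} : ContDiffMB n (fun _ : G => (0 : F)) U :=
  ⟨fun _ _ => 0, fun _ _ => rfl, fun _ _ x _ _ => hasMBDerivAt_const 0 x _,
    fun _ _ => continuousOn_const⟩

theorem ContDiffMB.add [ContinuousAdd F] {n : ℕ} {f g : G → F} {U : Set G}
    (hf : ContDiffMB n f U) (hg : ContDiffMB n g U) : ContDiffMB n (fun x => f x + g x) U := by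
  obtain ⟨Df, hf0, hfd, hfc⟩ := hf
  obtain ⟨Dg, hg0, hgd, hgc⟩ := hg
  exact ⟨fun k p => Df k p + Dg k p, fun x y => by simp only [hf0, hg0],
    fun k hk x hx y => (hfd k hk x hx y).add (hgd k hk x hx y),
    fun k hk => (hfc k hk).add (hgc k hk)⟩

theorem ContDiffMB.const_smul [ContinuousConstSMul ℝ F] {n : ℕ} {f : G → F} {U : Set G}
    (c : ℝ) (hf : ContDiffMB n f U) : ContDiffMB n (fun x => c • f x) U := by
  obtain ⟨D, hD0, hDd, hDc⟩ := hf
  exact ⟨fun k p => c • D k p, fun x y => by simp only [hD0],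
    fun k hk x hx y => (hDd k hk x hx y).const_smul c, fun k hk => (hDc k hk).const_smul c⟩

theorem ContDiffMB.sum [ContinuousAdd F] {ι : Type*} {n : ℕ} {f : ι → G → F} {U : Set G}
    {s : Finset ι} (hf : ∀ i ∈ s, ContDiffMB n (f i) U) :
    ContDiffMB n (fun x => ∑ i ∈ s, f i x) U := by
  simpa only [sum_fn] using
    sum_induction f (ContDiffMB n · U) (fun _ _ => ContDiffMB.add) contDiffMB_zero_fun hf

theorem ContDiffMB.comp_continuousLinearMap {n : ℕ} {f : G' → F} {U : Set G} {U' : Set G'}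
    (hf : ContDiffMB n f U') (A : G →L[ℝ] G') (hA : Set.MapsTo A U U') :
    ContDiffMB n (fun x => f (A x)) U := by
  obtain ⟨D, hD0, hDd, hDc⟩ := hf
  refine ⟨fun k p => D k (A p.1, fun i => A (p.2 i)), fun x y => hD0 _ _,
    fun k hk x hx y => (hDd k hk (A x) (hA hx) (fun i => A (y i))).comp_linearMap A.toLinearMap,
    fun k hk => (hDc k hk).comp (by fun_prop : Continuous _).continuousOn
      fun p hp => ⟨hA hp.1, Set.mem_univ _⟩⟩

theorem ContDiffMB.congr [ContinuousAdd G] [ContinuousSMul ℝ G] {n : ℕ} {f g : G → F}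
    {U : Set G} (hU : IsOpen U) (hg : ContDiffMB n g U) (hfg : Set.EqOn f g U) :
    ContDiffMB n f U := by
  obtain ⟨D, hD0, hDd, hDc⟩ := hg
  refine ⟨fun k => match k with
    | 0 => fun p => f p.1
    | k + 1 => D (k + 1), fun _ _ => rfl, fun k hk x hx y => ?_, fun k hk => ?_⟩
  · cases k with
    | zero =>
      have hDd0 := hDd 0 hk x hx y
      simp only [hD0] at hDd0
      exact hDd0.congr_of_eventuallyEq (hfg.eventuallyEq_of_mem (hU.mem_nhds hx))
    | succ k => exact hDd (k + 1) hk x hx y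
  · cases k with
    | zero => exact (hDc 0 hk).congr fun p hp => (hfg hp.1).trans (hD0 _ _).symm
    | succ k => exact hDc (k + 1) hk

end MichalBastiani

section Polarization

variable {ι E F : Type*} [Fintype ι] [DecidableEq ι]
  [AddCommGroup E] [Module ℝ E] [AddCommGroup F] [Module ℝ F]

noncomputable def polarization (h : E × E → F) (p : E × (ι → E)) : F :=
  ((Fintype.card ι).factorial : ℝ)⁻¹ • ∑ S : Finset ι, (-1 : ℝ) ^ #Sᶜ • h (p.1, ∑ i ∈ S, p.2 i)

theorem polarization_eq_of_symmetric {h : E × E → F} {x : E}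
    (B : MultilinearMap ℝ (fun _ : ι => E) F)
    (hB : ∀ (σ : Equiv.Perm ι) (y : ι → E), B (y ∘ σ) = B y) (hh : ∀ v, h (x, v) = B fun _ => v)
    (y : ι → E) : polarization h (x, y) = B y := by
  have hfac : ((Fintype.card ι).factorial : ℝ) ≠ 0 := by positivity
  simp only [polarization, hh, B.polarization hB, ← Nat.cast_smul_eq_nsmul ℝ, inv_smul_smul₀ hfac]

variable [TopologicalSpace E] [ContinuousAdd E] [TopologicalSpace F] [ContinuousAdd F]
  [ContinuousConstSMul ℝ F]

theorem ContDiffMB.polarization {n : ℕ} {h : E × E → F} {U : Set E}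
    (hh : ContDiffMB n h (U ×ˢ Set.univ)) :
    ContDiffMB n (polarization (ι := ι) h) (U ×ˢ Set.univ) := by
  have hdiag (S : Finset ι) :
      ContDiffMB n (fun p : E × (ι → E) => h (p.1, ∑ i ∈ S, p.2 i)) (U ×ˢ Set.univ) := by
    let A : E × (ι → E) →L[ℝ] E × E := (ContinuousLinearMap.fst ℝ E _).prod
      (∑ i ∈ S, (ContinuousLinearMap.proj i).comp (ContinuousLinearMap.snd ℝ E _))
    simpa [A] using hh.comp_continuousLinearMap A fun p hp => ⟨hp.1, Set.mem_univ _⟩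
  exact (ContDiffMB.sum fun S _ => (hdiag S).const_smul _).const_smul _

end Polarization

theorem continuous_and_contDiffMB_of_diagonal_general {E F : Type*}
    [AddCommGroup E] [Module ℝ E] [TopologicalSpace E] [IsTopologicalAddGroup E]
    [ContinuousSMul ℝ E]
    [AddCommGroup F] [Module ℝ F] [TopologicalSpace F] [IsTopologicalAddGroup F]
    [ContinuousSMul ℝ F]
    (k : ℕ) (U : Set E) (hU : IsOpen U)
    (f : E × (Fin k → E) → F)
    (hmulti : ∀ x ∈ U, ∃ B : MultilinearMap ℝ (fun _ : Fin k => E) F,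
      (∀ (σ : Equiv.Perm (Fin k)) (y : Fin k → E), B (y ∘ σ) = B y) ∧
      ∀ y : Fin k → E, f (x, y) = B y)
    (h : E × E → F) (hdef : ∀ p : E × E, h p = f (p.1, fun _ => p.2)) :
    (ContinuousOn h (U ×ˢ Set.univ) → ContinuousOn f (U ×ˢ Set.univ)) ∧
    (∀ r : ℕ, ContDiffMB r h (U ×ˢ Set.univ) → ContDiffMB r f (U ×ˢ Set.univ)) := by
  have hf : Set.EqOn f (polarization h) (U ×ˢ Set.univ) := by
    rintro ⟨x, y⟩ ⟨hx, -⟩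
    obtain ⟨B, hB, hfB⟩ := hmulti x hx
    rw [hfB, polarization_eq_of_symmetric B hB fun v => (hdef (x, v)).trans (hfB _)]
  have hcontDiff (r : ℕ) (hr : ContDiffMB r h (U ×ˢ Set.univ)) :
      ContDiffMB r f (U ×ˢ Set.univ) :=
    hr.polarization.congr (hU.prod isOpen_univ) hf
  exact ⟨fun hc => contDiffMB_zero.1 (hcontDiff 0 (contDiffMB_zero.2 hc)), hcontDiff⟩

/-- Let `E`, `F` be locally convex real spaces, `U ⊆ E` open, `k ≥ 2`, and
`f : U × E^k → F` such that `f(x,·)` is symmetric `k`-linear for each `x ∈ U`.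
If `h(x,y) = f(x,y,…,y)` is continuous then `f` is continuous; more generally,
if `h` is `C^r` then `f` is `C^r`. -/
theorem continuous_and_contDiffMB_of_diagonal {E F : Type*}
    [AddCommGroup E] [Module ℝ E] [TopologicalSpace E] [IsTopologicalAddGroup E]
    [ContinuousSMul ℝ E] [LocallyConvexSpace ℝ E]
    [AddCommGroup F] [Module ℝ F] [TopologicalSpace F] [IsTopologicalAddGroup F]
    [ContinuousSMul ℝ F] [LocallyConvexSpace ℝ F]
    (k : ℕ) (hk : 2 ≤ k) (U : Set E) (hU : IsOpen U)
    (f : E × (Fin k → E) → F)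
    (hmulti : ∀ x ∈ U, ∃ B : MultilinearMap ℝ (fun _ : Fin k => E) F,
      (∀ (σ : Equiv.Perm (Fin k)) (y : Fin k → E), B (y ∘ σ) = B y) ∧
      ∀ y : Fin k → E, f (x, y) = B y)
    (h : E × E → F) (hdef : ∀ p : E × E, h p = f (p.1, fun _ => p.2)) :
    (ContinuousOn h (U ×ˢ Set.univ) → ContinuousOn f (U ×ˢ Set.univ)) ∧
    (∀ r : ℕ, ContDiffMB r h (U ×ˢ Set.univ) → ContDiffMB r f (U ×ˢ Set.univ)) :=
  continuous_and_contDiffMB_of_diagonal_general k U hU f hmulti h hdef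
end

section
/- Let ε > 0 and for a separately continuous k-linear map β : E₁ × ⋯ × E_k → F and j ∈ {2,…,k}, let 𝒮 be a set of bounded subsets of E_j × ⋯ × E_k such that for every M ∈ 𝒮 there is N ∈ 𝒮 with t·M ⊆ N for all scalars |t| ≤ 1. Then the following are equivalent: (a) for each M ∈ 𝒮 and 0-neighbourhood W ⊆ F there is a 0-neighbourhood V ⊆ E₁ × ⋯ × E_{j−1} with β(V × M) ⊆ W; (c) β restricted to E₁ × ⋯ × E_{j−1} × M is continuous for each M ∈ 𝒮. -/
/-! For fixed `b`, `a ↦ β (splice a b)` is multilinear, and (a) says that these maps, for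
`b ∈ M`, are equicontinuous at `0`. Expanding `β(a₀ + d, b) - β(a₀, b)` as a sum over the nonempty
sets of coordinates taken from `d`, and rescaling each term by scalars of product one so that its
`a₀`-coordinates become small, gives equicontinuity at every `a₀`; with continuity of `β(a₀, ·)`
this is (c). Conversely, continuity at `(0, 0)` on `univ × N` bounds `β` on `V × (U ∩ N)`. As `M`
is bounded, `c⁻¹ • M ⊆ U ∩ N` for a large scalar `c`, and the factor `c⁻¹ ^ m` this costs in the
last `m` arguments is paid for by scaling one coordinate of `a` by `c ^ m`. -/

open Filter Topology Pointwise

theorem Filter.tendsto_prod_principal_iff_forall {X Y Z : Type*} {Φ : X × Y → Z}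
    {l : Filter X} {s : Set Y} {l' : Filter Z} :
    Tendsto Φ (l ×ˢ 𝓟 s) l' ↔ ∀ W ∈ l', ∃ V ∈ l, ∀ a ∈ V, ∀ b ∈ s, Φ (a, b) ∈ W := by
  simp only [tendsto_def, mem_prod_principal]
  exact forall₂_congr fun W _ => ⟨fun h => ⟨_, h, fun a ha => ha⟩,
    fun ⟨V, hV, hVW⟩ => mem_of_superset hV hVW⟩

theorem continuousOn_univ_prod_of_tendsto_sub {X Y G : Type*} [TopologicalSpace X]
    [TopologicalSpace Y] [TopologicalSpace G] [AddGroup G] [IsTopologicalAddGroup G]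
    {Φ : X × Y → G} {s : Set Y}
    (hunif : ∀ x, Tendsto (fun p => Φ p - Φ (x, p.2)) (𝓝 x ×ˢ 𝓟 s) (𝓝 0))
    (hcont : ∀ x, Continuous fun y => Φ (x, y)) :
    ContinuousOn Φ (Set.univ ×ˢ s) := by
  rintro ⟨x, y⟩ -
  have hle : 𝓝[Set.univ ×ˢ s] (x, y) ≤ 𝓝 x ×ˢ 𝓟 s := by
    rw [nhdsWithin_prod_eq, nhdsWithin_univ]
    exact prod_mono le_rfl inf_le_right
  have hsnd : Tendsto (fun p : X × Y => Φ (x, p.2)) (𝓝[Set.univ ×ˢ s] (x, y)) (𝓝 (Φ (x, y))) :=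
    ((hcont x).tendsto y).comp ((continuous_snd.tendsto (x, y)).mono_left nhdsWithin_le_nhds)
  simpa [ContinuousWithinAt] using ((hunif x).mono_left hle).add hsnd

namespace MultilinearMap

section Rescaling

variable {ι : Type*} [Fintype ι] {E : ι → Type*} {F : Type*}

theorem domDomRestrict_smul {R : Type*} [CommSemiring R] [∀ i, AddCommMonoid (E i)]
    [∀ i, Module R (E i)] [AddCommMonoid F] [Module R F]
    (β : MultilinearMap R E F) (P : ι → Prop) [DecidablePred P] (c : R)
    (z : ∀ i : {i // ¬P i}, E i) (x : ∀ i : {i // P i}, E i) :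
    β.domDomRestrict P (c • z) x = c ^ Fintype.card {i // ¬P i} • β.domDomRestrict P z x := by
  have := congrArg (· x) ((β.domDomRestrictₗ P).map_smul_univ (fun _ => c) z)
  simp only [Finset.prod_const, Finset.card_univ, smul_apply] at this
  exact this

theorem domDomRestrict_inv_smul_update_pow_smul {𝕜 : Type*} [Field 𝕜] [DecidableEq ι]
    [∀ i, AddCommMonoid (E i)] [∀ i, Module 𝕜 (E i)] [AddCommMonoid F] [Module 𝕜 F]
    (β : MultilinearMap 𝕜 E F) (P : ι → Prop) [DecidablePred P] {c : 𝕜} (hc : c ≠ 0)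
    (z : ∀ i : {i // ¬P i}, E i) (x : ∀ i : {i // P i}, E i) (i : {i // P i}) :
    β.domDomRestrict P (c⁻¹ • z) (Function.update x i (c ^ Fintype.card {i // ¬P i} • x i)) =
      β.domDomRestrict P z x := by
  rw [domDomRestrict_smul, MultilinearMap.map_update_smul, Function.update_eq_self, smul_smul,
    ← mul_pow, inv_mul_cancel₀ hc, one_pow, one_smul]

end Rescaling

variable {𝕜 ι : Type*} [NontriviallyNormedField 𝕜] [Fintype ι] [DecidableEq ι]
  {E : ι → Type*} [∀ i, AddCommGroup (E i)] [∀ i, Module 𝕜 (E i)] [∀ i, TopologicalSpace (E i)]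
  [∀ i, ContinuousSMul 𝕜 (E i)] {F : Type*} [AddCommGroup F] [Module 𝕜 F] [TopologicalSpace F]

section Family

variable {κ : Type*} {f : κ → MultilinearMap 𝕜 E F} {l : Filter κ}

theorem tendsto_apply_piecewise_nhds_zero
    (h : Tendsto (fun p : (∀ i, E i) × κ => f p.2 p.1) (𝓝 0 ×ˢ l) (𝓝 0))
    {S : Finset ι} (hS : S.Nonempty) (x : ∀ i, E i) :
    Tendsto (fun p : (∀ i, E i) × κ => f p.2 (S.piecewise p.1 x)) (𝓝 0 ×ˢ l) (𝓝 0) := by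
  obtain ⟨i₀, hi₀⟩ := hS
  intro W hW
  obtain ⟨U, hU, L, hL, hUL⟩ := mem_prod_iff.1 (h hW)
  -- `s c` has product one: it shrinks the coordinates taken from `x` by `c` and compensates at `i₀`
  let s : 𝕜 → ι → 𝕜 := fun c i => if i ∈ S then (if i = i₀ then (c ^ Sᶜ.card)⁻¹ else 1) else c
  have hs : ∀ c ≠ 0, ∏ i, s c i = 1 := fun c hc => by
    rw [Finset.prod_ite]
    simp only [Finset.prod_ite_eq', Finset.mem_filter, Finset.mem_univ, true_and, hi₀, if_true,
      Finset.prod_const, Finset.filter_notMem_eq_sdiff, ← Finset.compl_eq_univ_sdiff]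
    exact inv_mul_cancel₀ (pow_ne_zero _ hc)
  have hfixed : Tendsto (fun c : 𝕜 => S.piecewise (0 : ∀ i, E i) (c • x)) (𝓝 0) (𝓝 0) := by
    refine Continuous.tendsto' (continuous_pi fun i => ?_) _ _
      (by rw [zero_smul, Finset.piecewise_same])
    by_cases hi : i ∈ S <;> simp only [Finset.piecewise, hi, if_true, if_false]
    exacts [continuous_const, continuous_id.smul continuous_const]
  obtain ⟨c, hcU, hc⟩ := ((hfixed.eventually (eventually_mem_nhds_iff.2 hU)).filter_mono
    nhdsWithin_le_nhds |>.and (self_mem_nhdsWithin (s := {0}ᶜ))).exists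
  have hrescaled : Tendsto (fun d : ∀ i, E i => fun i => s c i • S.piecewise d x i) (𝓝 0)
      (𝓝 (S.piecewise (0 : ∀ i, E i) (c • x))) := by
    refine Continuous.tendsto' (continuous_pi fun i => ?_) _ _ (funext fun i => ?_)
    all_goals by_cases hi : i ∈ S <;> simp only [Finset.piecewise, hi, if_true, if_false]
    exacts [continuous_const.smul (continuous_apply i), continuous_const, smul_zero _,
      by simp [s, hi]]
  refine mem_map.2 (mem_of_superset (prod_mem_prod (mem_map.1 (hrescaled hcU)) hL) ?_)
  rintro ⟨d, b⟩ ⟨hd, hb⟩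
  have hW' : f b (fun i => s c i • S.piecewise d x i) ∈ W := hUL (Set.mk_mem_prod hd hb)
  rwa [map_smul_univ, hs c hc, one_smul] at hW'

theorem tendsto_sub_apply_nhds_prod [∀ i, IsTopologicalAddGroup (E i)] [ContinuousAdd F]
    (h : Tendsto (fun p : (∀ i, E i) × κ => f p.2 p.1) (𝓝 0 ×ˢ l) (𝓝 0)) (x : ∀ i, E i) :
    Tendsto (fun p : (∀ i, E i) × κ => f p.2 p.1 - f p.2 x) (𝓝 x ×ˢ l) (𝓝 0) := by
  have hexpand : ∀ (b : κ) (d : ∀ i, E i), f b (d + x) - f b x =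
      ∑ S ∈ (Finset.univ : Finset (Finset ι)).erase ∅, f b (S.piecewise d x) := fun b d => by
    rw [Finset.sum_erase_eq_sub (Finset.mem_univ _), Finset.piecewise_empty, ← map_add_univ]
  have hshift : Tendsto (fun p : (∀ i, E i) × κ => f p.2 (p.1 + x) - f p.2 x)
      (𝓝 0 ×ˢ l) (𝓝 0) := by
    simp only [hexpand]
    simpa only [Finset.sum_const_zero] using tendsto_finsetSum _ fun S hS =>
      tendsto_apply_piecewise_nhds_zero h
        (Finset.nonempty_iff_ne_empty.2 (Finset.ne_of_mem_erase hS)) x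
  have hrecenter : Tendsto (fun p : (∀ i, E i) × κ => (p.1 - x, p.2)) (𝓝 x ×ˢ l) (𝓝 0 ×ˢ l) :=
    (tendsto_sub_nhds_zero_iff.2 tendsto_id).prodMap tendsto_id
  simpa [Function.comp_def] using hshift.comp hrecenter

end Family

theorem tendsto_domDomRestrict_nhds_zero_prod_principal
    (β : MultilinearMap 𝕜 E F) {P : ι → Prop} [DecidablePred P] {i₀ : ι} (hi₀ : P i₀)
    {M N : Set (∀ i : {i // ¬P i}, E i)} (hM : Bornology.IsVonNBounded 𝕜 M)
    (hMN : ∀ t : 𝕜, ‖t‖ ≤ 1 → t • M ⊆ N)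
    (hcont : ContinuousOn (fun p : (∀ i : {i // P i}, E i) × (∀ i : {i // ¬P i}, E i) =>
      β.domDomRestrict P p.2 p.1) (Set.univ ×ˢ N)) :
    Tendsto (fun p : (∀ i : {i // P i}, E i) × (∀ i : {i // ¬P i}, E i) =>
      β.domDomRestrict P p.2 p.1) (𝓝 0 ×ˢ 𝓟 M) (𝓝 0) := by
  rcases M.eq_empty_or_nonempty with rfl | ⟨b₀, hb₀⟩
  · simp
  have h0N : (0 : ∀ i : {i // ¬P i}, E i) ∈ N := by
    simpa using hMN 0 (by simp) (Set.smul_mem_smul_set hb₀)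
  have : Nonempty {i // P i} := ⟨⟨i₀, hi₀⟩⟩
  have h00 := hcont (0, 0) ⟨trivial, h0N⟩
  rw [ContinuousWithinAt, nhdsWithin_prod_eq, nhdsWithin_univ, map_zero] at h00
  intro W hW
  obtain ⟨U, hU, T, hT, hUT⟩ := mem_prod_iff.1 (h00 hW)
  obtain ⟨U', hU', hU'T⟩ := mem_nhdsWithin_iff_exists_mem_nhds_inter.1 hT
  obtain ⟨c, hMc, hc1⟩ := ((hM hU').and (eventually_cobounded_le_norm 1)).exists
  have hc : c ≠ 0 := norm_pos_iff.1 (one_pos.trans_le hc1)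
  let i' : {i // P i} := ⟨i₀, hi₀⟩
  let σ : (∀ i : {i // P i}, E i) → (∀ i : {i // P i}, E i) :=
    fun a => Function.update a i' (c ^ Fintype.card {i // ¬P i} • a i')
  have hσ : Tendsto σ (𝓝 0) (𝓝 0) :=
    (continuous_id.update i' (continuous_const.smul (continuous_apply i'))).tendsto' _ _
      (by simp)
  refine mem_map.2 (mem_of_superset (prod_mem_prod (hσ hU) (mem_principal_self M)) ?_)
  rintro ⟨a, b⟩ ⟨ha, hb⟩
  have hb' : c⁻¹ • b ∈ U' ∩ N :=
    ⟨(Set.mem_smul_set_iff_inv_smul_mem₀ hc _ _).1 (hMc hb),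
      hMN _ (by simpa using inv_le_one_of_one_le₀ hc1) (Set.smul_mem_smul_set hb)⟩
  have hW' := hUT (Set.mk_mem_prod ha (hU'T hb'))
  rwa [Set.mem_preimage, domDomRestrict_inv_smul_update_pow_smul β P hc] at hW'

end MultilinearMap

theorem hypocontinuity_iff_continuousOn_general {k : ℕ} (hk : 2 ≤ k)
    {E : Fin k → Type*} [∀ i, AddCommGroup (E i)] [∀ i, Module ℝ (E i)]
    [∀ i, TopologicalSpace (E i)] [∀ i, IsTopologicalAddGroup (E i)]
    [∀ i, ContinuousSMul ℝ (E i)]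
    {F : Type*} [AddCommGroup F] [Module ℝ F] [TopologicalSpace F]
    [IsTopologicalAddGroup F]
    (β : MultilinearMap ℝ E F) (j : ℕ) (hj2 : 2 ≤ j)
    (htail : ∀ a : ∀ i : {i : Fin k // (i : ℕ) < j - 1}, E i.1,
      Continuous fun b : ∀ i : {i : Fin k // ¬ (i : ℕ) < j - 1}, E i.1 => β (splice a b))
    (𝒮 : Set (Set (∀ i : {i : Fin k // ¬ (i : ℕ) < j - 1}, E i.1)))
    (h𝒮bdd : ∀ M ∈ 𝒮, Bornology.IsVonNBounded ℝ M)
    (h𝒮bal : ∀ M ∈ 𝒮, ∃ N ∈ 𝒮, ∀ t : ℝ, |t| ≤ 1 → t • M ⊆ N) :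
    (∀ M ∈ 𝒮, ∀ W ∈ 𝓝 (0 : F),
        ∃ V ∈ 𝓝 (0 : ∀ i : {i : Fin k // (i : ℕ) < j - 1}, E i.1),
          ∀ a ∈ V, ∀ b ∈ M, β (splice a b) ∈ W) ↔
      (∀ M ∈ 𝒮, ContinuousOn
        (fun p : (∀ i : {i : Fin k // (i : ℕ) < j - 1}, E i.1) ×
            (∀ i : {i : Fin k // ¬ (i : ℕ) < j - 1}, E i.1) => β (splice p.1 p.2))
        (Set.univ ×ˢ M)) := by
  -- `β (splice a b)` and `β.domDomRestrict P b a` are definitionally equal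
  let P : Fin k → Prop := fun i => (i : ℕ) < j - 1
  have hi₀ : P ⟨0, by omega⟩ := by simp only [P]; omega
  refine ⟨fun ha M hM => ?_, fun hc M hM => ?_⟩
  · refine continuousOn_univ_prod_of_tendsto_sub (fun a₀ => ?_) htail
    exact MultilinearMap.tendsto_sub_apply_nhds_prod (f := fun b => β.domDomRestrict P b)
      (tendsto_prod_principal_iff_forall.2 (ha M hM)) a₀
  · obtain ⟨N, hN, hMN⟩ := h𝒮bal M hM
    exact tendsto_prod_principal_iff_forall.1 <|
      β.tendsto_domDomRestrict_nhds_zero_prod_principal hi₀ (h𝒮bdd M hM) hMN (hc N hN)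

/-- For a separately continuous `k`-linear map `β : E₁ × ⋯ × E_k → F` between locally
convex real spaces such that `β(x,·) : E_j × ⋯ × E_k → F` is continuous for each
`x ∈ E₁ × ⋯ × E_{j−1}`, and a set `𝒮` of bounded subsets of `E_j × ⋯ × E_k` such that
for every `M ∈ 𝒮` there is `N ∈ 𝒮` containing `t·M` for all `|t| ≤ 1`, the following
are equivalent:
(a) for each `M ∈ 𝒮` and `0`-neighbourhood `W ⊆ F` there is a `0`-neighbourhood
    `V ⊆ E₁ × ⋯ × E_{j−1}` with `β(V × M) ⊆ W`;
(c) `β` restricted to `E₁ × ⋯ × E_{j−1} × M` is continuous for each `M ∈ 𝒮`. -/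
theorem hypocontinuity_iff_continuousOn {k : ℕ} (hk : 2 ≤ k)
    (ε : ℝ) (hε : 0 < ε)
    {E : Fin k → Type*} [∀ i, AddCommGroup (E i)] [∀ i, Module ℝ (E i)]
    [∀ i, TopologicalSpace (E i)] [∀ i, IsTopologicalAddGroup (E i)]
    [∀ i, ContinuousSMul ℝ (E i)] [∀ i, LocallyConvexSpace ℝ (E i)]
    {F : Type*} [AddCommGroup F] [Module ℝ F] [TopologicalSpace F]
    [IsTopologicalAddGroup F] [ContinuousSMul ℝ F] [LocallyConvexSpace ℝ F]
    (β : MultilinearMap ℝ E F) (j : ℕ) (hj2 : 2 ≤ j) (hjk : j ≤ k)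
    (hsep : ∀ (i : Fin k) (x : ∀ i, E i), Continuous fun y : E i => β (Function.update x i y))
    (htail : ∀ a : ∀ i : {i : Fin k // (i : ℕ) < j - 1}, E i.1,
      Continuous fun b : ∀ i : {i : Fin k // ¬ (i : ℕ) < j - 1}, E i.1 => β (splice a b))
    (𝒮 : Set (Set (∀ i : {i : Fin k // ¬ (i : ℕ) < j - 1}, E i.1)))
    (h𝒮bdd : ∀ M ∈ 𝒮, Bornology.IsVonNBounded ℝ M)
    (h𝒮bal : ∀ M ∈ 𝒮, ∃ N ∈ 𝒮, ∀ t : ℝ, |t| ≤ 1 → t • M ⊆ N) :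
    (∀ M ∈ 𝒮, ∀ W ∈ 𝓝 (0 : F),
        ∃ V ∈ 𝓝 (0 : ∀ i : {i : Fin k // (i : ℕ) < j - 1}, E i.1),
          ∀ a ∈ V, ∀ b ∈ M, β (splice a b) ∈ W) ↔
      (∀ M ∈ 𝒮, ContinuousOn
        (fun p : (∀ i : {i : Fin k // (i : ℕ) < j - 1}, E i.1) ×
            (∀ i : {i : Fin k // ¬ (i : ℕ) < j - 1}, E i.1) => β (splice p.1 p.2))
        (Set.univ ×ˢ M)) :=
  hypocontinuity_iff_continuousOn_general hk β j hj2 htail 𝒮 h𝒮bdd h𝒮bal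
end

section
/- Every C¹ map between locally convex spaces is locally Lipschitz: if f : U → F is C¹ on an open subset U of a locally convex space E, then for each x ∈ U and each continuous seminorm q on F there exists a continuous seminorm p on E with B_p(x,1) ⊆ U and q(f(z) − f(y)) ≤ p(z − y) for all y, z ∈ B_p(x,1). -/
open Filter Topology

/-!
The directional derivative `g (w, u)` is continuous at `(x, 0)`, where `q ∘ g` vanishes, so
`q (g (w, u)) < 1` on a product of `p`-balls `B_p(x,1) × B_p(0,1)` for a single continuous
seminorm `p`. Given `y, z` in the convex ball `B_p(x,1)` and `r > p (z - y)`, the direction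
`v = r⁻¹ • (z - y)` lies in `B_p(0,1)`, and a one-sided mean value inequality for
`t ↦ q (f (y + t • v) - f y)` on `[0, r]` yields `q (f z - f y) ≤ r`.
-/

open Set

section DirectionalDerivative

variable {E F : Type*} [AddCommGroup E] [Module ℝ E] [TopologicalSpace E]
  [AddCommGroup F] [Module ℝ F] [TopologicalSpace F]

theorem HasMBDerivAt.seminorm_eq_zero_of_zero_dir {f : E → F} {x : E} {v : F}
    (h : HasMBDerivAt f x 0 v) {q : Seminorm ℝ F} (hq : Continuous q) : q v = 0 := by
  refine tendsto_nhds_unique ((hq.tendsto v).comp h) (tendsto_const_nhds.congr fun t => ?_)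
  simp

theorem HasMBDerivAt.eventually_seminorm_sub_lt {f : E → F} {x y : E} {v : F}
    (h : HasMBDerivAt f x y v) {q : Seminorm ℝ F} (hq : Continuous q) {ρ : ℝ} (hρ : q v < ρ) :
    ∀ᶠ t in 𝓝[>] 0, q (f (x + t • y) - f x) < ρ * t := by
  have hlim := ((hq.tendsto v).comp h).mono_left (nhdsWithin_mono _ fun t (ht : 0 < t) => ht.ne')
  filter_upwards [hlim.eventually_lt_const hρ, self_mem_nhdsWithin] with t hlt (ht : 0 < t)
  rwa [Function.comp_apply, map_smul_eq_mul, norm_inv, Real.norm_of_nonneg ht.le,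
    inv_mul_lt_iff₀ ht, mul_comm] at hlt

theorem ContDiffMB.continuousOn {n : ℕ} {f : E → F} {U : Set E} (hf : ContDiffMB n f U) :
    ContinuousOn f U := by
  obtain ⟨D, hD0, -, hDc⟩ := hf
  have := (hDc 0 n.zero_le).comp (f := fun w => (w, (Fin.elim0 : Fin 0 → E)))
    (by fun_prop) fun w hw => ⟨hw, trivial⟩
  simpa only [Function.comp_def, hD0] using this

theorem ContDiffMB.exists_continuousOn_dirDeriv {n : ℕ} {f : E → F} {U : Set E}
    (hf : ContDiffMB n f U) (hn : 1 ≤ n) :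
    ∃ g : E × E → F, ContinuousOn g (U ×ˢ univ) ∧ ∀ w ∈ U, ∀ u, HasMBDerivAt f w u (g (w, u)) := by
  obtain ⟨D, hD0, hD, hDc⟩ := hf
  refine ⟨fun wu => D 1 (wu.1, fun _ => wu.2),
    (hDc 1 hn).comp (by fun_prop) fun wu hwu => ⟨hwu.1, trivial⟩, fun w hw u => ?_⟩
  simpa only [hD0] using hD 0 hn w hw fun _ => u

variable [IsTopologicalAddGroup F]

theorem seminorm_image_sub_le_mul_of_hasMBDerivAt {f : E → F} {q : Seminorm ℝ F}
    (hq : Continuous q) {y v : E} {r M : ℝ} (hr : 0 ≤ r)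
    (hf : ContinuousOn (fun t : ℝ => f (y + t • v)) (Icc 0 r))
    (hderiv : ∀ t ∈ Ico 0 r, ∃ d, HasMBDerivAt f (y + t • v) v d ∧ q d ≤ M) :
    q (f (y + r • v) - f y) ≤ M * r := by
  set φ : ℝ → ℝ := fun t => q (f (y + t • v) - f y)
  have hφ : ContinuousOn φ (Icc 0 r) := (hq.comp (continuous_sub_right _)).comp_continuousOn hf
  refine image_le_of_liminf_slope_right_le_deriv_boundary hφ (B := (M * ·)) (B' := fun _ => M)
    (by simp [φ]) (by fun_prop) (fun t _ => by simpa using (hasDerivWithinAt_id t _).const_mul M)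
    (fun t ht ρ hρ => ?_) (right_mem_Icc.2 hr)
  obtain ⟨d, hd, hdM⟩ := hderiv t ht
  have hshift : Tendsto (· - t) (𝓝[>] t) (𝓝[>] 0) := by
    rw [Tendsto, map_subRight_nhdsGT, sub_self]
  refine ((hshift.eventually (hd.eventually_seminorm_sub_lt hq (hdM.trans_lt hρ))).and
    self_mem_nhdsWithin).frequently.mono fun s ⟨hs, (hts : t < s)⟩ => ?_
  have hpath : y + t • v + (s - t) • v = y + s • v := by module
  have htri : φ s ≤ q (f (y + s • v) - f (y + t • v)) + φ t := by
    simpa using map_add_le_add q (f (y + s • v) - f (y + t • v)) (f (y + t • v) - f y)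
  rw [hpath] at hs
  rw [slope_def_field, div_lt_iff₀ (sub_pos.2 hts)]
  linarith

theorem Convex.seminorm_image_sub_le_of_hasMBDerivAt [IsTopologicalAddGroup E]
    [ContinuousSMul ℝ E] {f : E → F} {s : Set E} (hs : Convex ℝ s) (hfs : ContinuousOn f s)
    {p : Seminorm ℝ E} {q : Seminorm ℝ F} (hq : Continuous q)
    (hderiv : ∀ w ∈ s, ∀ u ∈ p.ball 0 1, ∃ d, HasMBDerivAt f w u d ∧ q d ≤ 1)
    {y z : E} (hy : y ∈ s) (hz : z ∈ s) : q (f z - f y) ≤ p (z - y) := by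
  refine le_of_forall_gt_imp_ge_of_dense fun r hr => ?_
  have hr0 : 0 < r := (apply_nonneg p _).trans_lt hr
  set v := r⁻¹ • (z - y)
  have hseg : ∀ t ∈ Icc 0 r, y + t • v ∈ s := fun t ht => by
    have hθ : r⁻¹ * t ∈ Icc (0 : ℝ) 1 :=
      ⟨by have := ht.1; positivity, inv_mul_le_one_of_le₀ ht.2 hr0.le⟩
    simpa [v, smul_smul, mul_comm] using hs.add_smul_sub_mem hy hz hθ
  have hv : v ∈ p.ball 0 1 := by
    rwa [Seminorm.mem_ball_zero, map_smul_eq_mul, norm_inv, Real.norm_of_nonneg hr0.le,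
      inv_mul_lt_iff₀ hr0, mul_one]
  have hrv : y + r • v = z := by simp [v, smul_smul, hr0.ne']
  have := seminorm_image_sub_le_mul_of_hasMBDerivAt hq hr0.le
    (hfs.comp (by fun_prop) hseg) fun t ht => hderiv _ (hseg t (Ico_subset_Icc_self ht)) v hv
  rwa [hrv, one_mul] at this

end DirectionalDerivative

theorem exists_continuous_seminorm_ball_subset {E : Type*} [AddCommGroup E] [Module ℝ E]
    [TopologicalSpace E] [IsTopologicalAddGroup E] [ContinuousSMul ℝ E] [LocallyConvexSpace ℝ E]
    {s : Set E} {a : E} (hs : s ∈ 𝓝 a) : ∃ p : Seminorm ℝ E, Continuous p ∧ p.ball a 1 ⊆ s := by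
  have hs0 : (a + ·) ⁻¹' s ∈ 𝓝 0 :=
    (continuous_const_add a).continuousAt.preimage_mem_nhds (by rwa [add_zero])
  obtain ⟨t, ht, hts⟩ := (nhds_hasBasis_absConvex_open ℝ E).mem_iff.1 hs0
  refine ⟨gaugeSeminormFamily ℝ E ⟨t, ht⟩, with_gaugeSeminormFamily.continuous_seminorm _,
    fun w hw => ?_⟩
  have hwa : w - a ∈ t := (gaugeSeminormFamily_ball (𝕜 := ℝ) ⟨t, ht⟩).subset
    ((Seminorm.mem_ball_zero _).2 ((Seminorm.mem_ball _).1 hw))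
  simpa using hts hwa

theorem locallyLipschitz_of_contDiffMB_one_general {E F : Type*}
    [AddCommGroup E] [Module ℝ E] [TopologicalSpace E] [IsTopologicalAddGroup E]
    [ContinuousSMul ℝ E] [LocallyConvexSpace ℝ E]
    [AddCommGroup F] [Module ℝ F] [TopologicalSpace F] [IsTopologicalAddGroup F]
    (U : Set E) (hU : IsOpen U) (f : E → F) (hf : ContDiffMB 1 f U) :
    ∀ x ∈ U, ∀ q : Seminorm ℝ F, Continuous ⇑q →
      ∃ p : Seminorm ℝ E, Continuous ⇑p ∧ p.ball x 1 ⊆ U ∧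
        ∀ y ∈ p.ball x 1, ∀ z ∈ p.ball x 1, q (f z - f y) ≤ p (z - y) := by
  intro x hx q hq
  obtain ⟨g, hgc, hg⟩ := hf.exists_continuousOn_dirDeriv le_rfl
  have hsmall : ∀ᶠ wu in 𝓝 (x, 0), q (g wu) < 1 := by
    have hcont : ContinuousAt (fun wu => q (g wu)) (x, 0) :=
      hq.continuousAt.comp (hgc.continuousAt (prod_mem_nhds (hU.mem_nhds hx) univ_mem))
    refine hcont.eventually_lt continuousAt_const ?_
    simp [(hg x hx 0).seminorm_eq_zero_of_zero_dir hq]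
  obtain ⟨V, hV, W, hW, hVW⟩ := mem_nhds_prod_iff.1 hsmall
  obtain ⟨p₁, hp₁, hp₁V⟩ := exists_continuous_seminorm_ball_subset (inter_mem hV (hU.mem_nhds hx))
  obtain ⟨p₂, hp₂, hp₂W⟩ := exists_continuous_seminorm_ball_subset hW
  have hball : (p₁ ⊔ p₂).ball x 1 ⊆ V ∩ U := by
    rw [Seminorm.ball_sup]
    exact inter_subset_left.trans hp₁V
  refine ⟨p₁ ⊔ p₂, by rw [Seminorm.coe_sup]; exact hp₁.max hp₂, fun w hw => (hball hw).2,
    fun y hy z hz => ?_⟩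
  refine (Seminorm.convex_ball ..).seminorm_image_sub_le_of_hasMBDerivAt
    (hf.continuousOn.mono fun w hw => (hball hw).2) hq (fun w hw u hu => ?_) hy hz
  rw [Seminorm.ball_sup] at hu
  exact ⟨g (w, u), hg w (hball hw).2 u, (hVW ⟨(hball hw).1, hp₂W hu.2⟩).le⟩

/-- Every `C¹` map (in the Michal–Bastiani sense) between locally convex real spaces is
locally Lipschitz: for each `x ∈ U` and each continuous seminorm `q` on `F` there is a
continuous seminorm `p` on `E` with `B_p(x,1) ⊆ U` and
`q(f z − f y) ≤ p(z − y)` for all `y, z ∈ B_p(x,1)`. -/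
theorem locallyLipschitz_of_contDiffMB_one {E F : Type*}
    [AddCommGroup E] [Module ℝ E] [TopologicalSpace E] [IsTopologicalAddGroup E]
    [ContinuousSMul ℝ E] [LocallyConvexSpace ℝ E]
    [AddCommGroup F] [Module ℝ F] [TopologicalSpace F] [IsTopologicalAddGroup F]
    [ContinuousSMul ℝ F] [LocallyConvexSpace ℝ F]
    (U : Set E) (hU : IsOpen U) (f : E → F) (hf : ContDiffMB 1 f U) :
    ∀ x ∈ U, ∀ q : Seminorm ℝ F, Continuous ⇑q →
      ∃ p : Seminorm ℝ E, Continuous ⇑p ∧ p.ball x 1 ⊆ U ∧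
        ∀ y ∈ p.ball x 1, ∀ z ∈ p.ball x 1, q (f z - f y) ≤ p (z - y) :=
  locallyLipschitz_of_contDiffMB_one_general U hU f hf
end

section
/- Let E be the dense subspace of ℓ¹ consisting of eventually-zero real sequences, with the subspace topology. There exists a complete locally convex space F and a smooth map f : E → F (in the Michal–Bastiani sense; equivalently here, f is smooth on a neighbourhood of each point as a map into a finite-dimensional subspace of a factor) that admits no continuous extension to E ∪ {z} for any z ∈ ℓ¹ \ E. -/
open Filter Topology

/-- The dense subspace of `ℓ¹` consisting of the eventually-zero sequences, with the
subspace topology. -/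
noncomputable def finSupportSubspace : Submodule ℝ (lp (fun _ : ℕ => ℝ) 1) where
  carrier := {x | ∃ N, ∀ n ≥ N, x n = 0}
  zero_mem' := ⟨0, fun n _ => by simp⟩
  add_mem' := by
    rintro x y ⟨N, hN⟩ ⟨M, hM⟩
    exact ⟨max N M, fun n hn => by
      simp [hN n (le_trans (le_max_left _ _) hn), hM n (le_trans (le_max_right _ _) hn)]⟩
  smul_mem' := by
    rintro c x ⟨N, hN⟩
    exact ⟨N, fun n hn => by simp [hN n hn]⟩

/-- A smooth (Michal–Bastiani) map from the eventually-zero sequences `E ⊆ ℓ¹` to a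
complete locally convex space `F` that has no continuous extension to `E ∪ {z}` for
any `z ∈ ℓ¹ \ E`. -/
structure PathologicalSmoothMap : Type 1 where
  F : Type
  [grp : AddCommGroup F]
  [uni : UniformSpace F]
  [mod : Module ℝ F]
  [uag : IsUniformAddGroup F]
  [csm : ContinuousSMul ℝ F]
  [lcs : LocallyConvexSpace ℝ F]
  [cpl : CompleteSpace F]
  f : finSupportSubspace → F
  smooth : ∀ n : ℕ, ContDiffMB n f Set.univ
  no_extension : ∀ z : lp (fun _ : ℕ => ℝ) 1, z ∉ finSupportSubspace →
    ¬∃ g : ((finSupportSubspace : Set (lp (fun _ : ℕ => ℝ) 1)) ∪ {z} :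
        Set (lp (fun _ : ℕ => ℝ) 1)) → F,
      Continuous g ∧ ∀ x : finSupportSubspace, g ⟨x.1, Or.inl x.2⟩ = f x


/-! For `z ∈ ℓ¹ \ E` put `f_z x = ∑ₙ ∏_{m<n} h_m(x_m)`, where `h_m` is a smooth cutoff equal to `1`
at `z_m` and, when `z_m ≠ 0`, vanishing near `0`; the map is `f = (f_z)_z` into `ℝ^(ℓ¹ \ E)`.
Since `z` has infinitely many nonzero coordinates, near any finitely supported point all but
finitely many terms vanish identically, so `f_z` is locally a finite sum of smooth cylinder
functions and is Michal–Bastiani smooth. On the truncation of `z` to its first `k` coordinates the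
first `k` terms equal `1`, so `f_z` is at least `k` there; as these truncations tend to `z`, no
continuous extension to `E ∪ {z}` can exist. -/

open Function Set
open scoped ContDiff

local notation "ℓ¹" => lp (fun _ : ℕ => ℝ) 1

section MichalBastiani

variable {G F : Type*} [AddCommGroup G] [Module ℝ G] [TopologicalSpace G]
  [AddCommGroup F] [Module ℝ F] [TopologicalSpace F]

structure HasMBIteratedDeriv (f : G → F) (D : ∀ k : ℕ, G × (Fin k → G) → F) : Prop where
  zero_eq : ∀ x y, D 0 (x, y) = f x
  hasMBDerivAt : ∀ k x (y : Fin (k + 1) → G),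
    HasMBDerivAt (fun x' => D k (x', fun i => y i.castSucc)) x (y (Fin.last k)) (D (k + 1) (x, y))
  continuous : ∀ k, Continuous (D k)

theorem HasMBIteratedDeriv.contDiffMB {f : G → F} {D : ∀ k : ℕ, G × (Fin k → G) → F}
    (h : HasMBIteratedDeriv f D) (n : ℕ) : ContDiffMB n f univ :=
  ⟨D, h.zero_eq, fun k _ x _ y => h.hasMBDerivAt k x y, fun k _ => (h.continuous k).continuousOn⟩

theorem HasMBIteratedDeriv.pi {ι : Type*} {F : ι → Type*} [∀ i, AddCommGroup (F i)]
    [∀ i, Module ℝ (F i)] [∀ i, TopologicalSpace (F i)] {f : ∀ i, G → F i}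
    {D : ∀ i, ∀ k : ℕ, G × (Fin k → G) → F i} (h : ∀ i, HasMBIteratedDeriv (f i) (D i)) :
    HasMBIteratedDeriv (fun x i => f i x) (fun k p i => D i k p) where
  zero_eq x y := funext fun i => (h i).zero_eq x y
  hasMBDerivAt k x y := tendsto_pi_nhds.2 fun i => (h i).hasMBDerivAt k x y
  continuous k := continuous_pi fun i => (h i).continuous k

section Locality

variable [ContinuousAdd G] [ContinuousSMul ℝ G] [T2Space F]
  {f : G → F} {D : ∀ k : ℕ, G × (Fin k → G) → F}

theorem eventually_add_smul_mem {U : Set G} {x : G} (hU : U ∈ 𝓝 x) (y : G) :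
    ∀ᶠ t : ℝ in 𝓝 0, x + t • y ∈ U :=
  (Continuous.tendsto (by fun_prop : Continuous fun t : ℝ => x + t • y) 0).eventually_mem
    (by simpa using hU)

theorem HasMBIteratedDeriv.apply_eq_zero_of_eqOn (h : HasMBIteratedDeriv f D) {U : Set G}
    (hU : IsOpen U) (hf : EqOn f 0 U) : ∀ k {x}, x ∈ U → ∀ y, D k (x, y) = 0
  | 0, x, hx, y => (h.zero_eq x y).trans (hf hx)
  | k + 1, x, hx, y => by
    have hquot : ∀ᶠ t : ℝ in 𝓝[≠] 0, t⁻¹ • (D k (x + t • y (Fin.last k), fun i => y i.castSucc)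
        - D k (x, fun i => y i.castSucc)) = 0 := by
      refine ((eventually_add_smul_mem (hU.mem_nhds hx) (y (Fin.last k))).filter_mono
        nhdsWithin_le_nhds).mono fun t ht => ?_
      rw [h.apply_eq_zero_of_eqOn hU hf k ht, h.apply_eq_zero_of_eqOn hU hf k hx, sub_self,
        smul_zero]
    exact tendsto_nhds_unique (h.hasMBDerivAt k x y)
      (tendsto_const_nhds.congr' (hquot.mono fun _ ht => ht.symm))

theorem HasMBIteratedDeriv.support_subset (h : HasMBIteratedDeriv f D) (k : ℕ) :
    support (D k) ⊆ Prod.fst ⁻¹' tsupport f := fun p hp => by_contra fun hx =>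
  hp (h.apply_eq_zero_of_eqOn (isClosed_tsupport f).isOpen_compl
    (fun _ => image_eq_zero_of_notMem_tsupport) k hx p.2)

end Locality

section Finsum

variable [ContinuousAdd G] [ContinuousSMul ℝ G] [T2Space F]
  {ι : Type*} {f : ι → G → F} {D : ι → ∀ k : ℕ, G × (Fin k → G) → F}

theorem HasMBIteratedDeriv.exists_finset_finsum_eq (h : ∀ i, HasMBIteratedDeriv (f i) (D i))
    (hf : LocallyFinite fun i => support (f i)) (x : G) :
    ∃ I : Finset ι, ∀ᶠ x' in 𝓝 x, ∀ k y, ∑ᶠ i, D i k (x', y) = ∑ i ∈ I, D i k (x', y) := by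
  obtain ⟨U, hU, hUfin⟩ := hf.closure x
  refine ⟨hUfin.toFinset, mem_of_superset hU fun x' hx' k y =>
    finsum_eq_sum_of_support_subset _ fun i hi => ?_⟩
  rw [Finite.coe_toFinset]
  exact ⟨x', (h i).support_subset k hi, hx'⟩

theorem HasMBIteratedDeriv.finsum [ContinuousAdd F] (h : ∀ i, HasMBIteratedDeriv (f i) (D i))
    (hf : LocallyFinite fun i => support (f i)) :
    HasMBIteratedDeriv (fun x => ∑ᶠ i, f i x) (fun k p => ∑ᶠ i, D i k p) where
  zero_eq x y := finsum_congr fun i => (h i).zero_eq x y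
  continuous k := continuous_finsum (fun i => (h i).continuous k)
    ((hf.closure.preimage_continuous continuous_fst).subset fun i => (h i).support_subset k)
  hasMBDerivAt k x y := by
    obtain ⟨I, hI⟩ := HasMBIteratedDeriv.exists_finset_finsum_eq h hf x
    have hquot : ∀ᶠ t : ℝ in 𝓝[≠] 0,
        ∑ i ∈ I, t⁻¹ • (D i k (x + t • y (Fin.last k), fun j => y j.castSucc)
          - D i k (x, fun j => y j.castSucc))
        = t⁻¹ • (∑ᶠ i, D i k (x + t • y (Fin.last k), fun j => y j.castSucc)
          - ∑ᶠ i, D i k (x, fun j => y j.castSucc)) := by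
      refine ((eventually_add_smul_mem hI (y (Fin.last k))).filter_mono nhdsWithin_le_nhds).mono
        fun t ht => ?_
      rw [ht, hI.self_of_nhds, ← Finset.sum_sub_distrib, Finset.smul_sum]
    rw [show ∑ᶠ i, D i (k + 1) (x, y) = ∑ i ∈ I, D i (k + 1) (x, y) from hI.self_of_nhds _ _]
    exact (tendsto_finsetSum I fun i _ => (h i).hasMBDerivAt k x y).congr' hquot

end Finsum

end MichalBastiani

section LinearPullback

variable {G V W : Type*} [AddCommGroup G] [Module ℝ G] [TopologicalSpace G]
  [NormedAddCommGroup V] [NormedSpace ℝ V] [NormedAddCommGroup W] [NormedSpace ℝ W]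

theorem HasFDerivAt.hasMBDerivAt_comp {ψ : V → W} {ψ' : V →L[ℝ] W} {L : G →ₗ[ℝ] V} {x : G}
    (hψ : HasFDerivAt ψ ψ' (L x)) (y : G) : HasMBDerivAt (fun x' => ψ (L x')) x y (ψ' (L y)) := by
  have hline : HasDerivAt (fun t : ℝ => ψ (L x + t • L y)) (ψ' (L y)) 0 := by
    refine hψ.comp_hasDerivAt_of_eq 0 ?_ (by simp)
    simpa using ((hasDerivAt_id (0 : ℝ)).smul_const (L y)).const_add (L x)
  refine (hasDerivAt_iff_tendsto_slope.1 hline).congr fun t => ?_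
  simp [slope_def_module]

-- The direction of the newest derivative is the last argument in `HasMBIteratedDeriv` but the
-- first in `iteratedFDeriv_succ_apply_left`, hence the reversal.
noncomputable def mbIteratedDerivComp (φ : V → W) (L : G →L[ℝ] V) (k : ℕ)
    (p : G × (Fin k → G)) : W :=
  iteratedFDeriv ℝ k φ (L p.1) fun i => L (p.2 i.rev)

theorem ContDiff.hasMBIteratedDeriv_comp {φ : V → W} (hφ : ContDiff ℝ ∞ φ) (L : G →L[ℝ] V) :
    HasMBIteratedDeriv (fun x => φ (L x)) (mbIteratedDerivComp φ L) where
  zero_eq x y := iteratedFDeriv_zero_apply _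
  continuous k := by
    have hderiv : Continuous fun p : G × (Fin k → G) => iteratedFDeriv ℝ k φ (L p.1) :=
      (hφ.continuous_iteratedFDeriv (mod_cast le_top)).comp (L.continuous.comp continuous_fst)
    have hdirs : Continuous fun p : G × (Fin k → G) => fun i : Fin k => L (p.2 i.rev) := by
      fun_prop
    exact continuous_eval.comp (hderiv.prodMk hdirs)
  hasMBDerivAt k x y := by
    have hd := hφ.differentiable_iteratedFDeriv (m := k) (mod_cast WithTop.coe_lt_top _) (L x)
    convert (hd.hasFDerivAt.continuousMultilinear_apply_const
      fun i => L (y i.rev.castSucc)).hasMBDerivAt_comp (L := (L : G →ₗ[ℝ] V)) (y (Fin.last k))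
      using 1
    · rfl
    rw [show mbIteratedDerivComp φ L (k + 1) (x, y) = _ from iteratedFDeriv_succ_apply_left _]
    change _ = fderiv ℝ (iteratedFDeriv ℝ k φ) (L x) (L (y (Fin.last k))) _
    congr 1
    funext i
    simp [Fin.tail, Fin.rev_succ]

end LinearPullback

noncomputable section Construction

def cutoff (c t : ℝ) : ℝ := if c = 0 then 1 else Real.smoothTransition (2 * (t / c) ^ 2 - 1)

theorem contDiff_cutoff (c : ℝ) : ContDiff ℝ ∞ (cutoff c) := by
  unfold cutoff
  split_ifs
  · exact contDiff_const
  · exact Real.smoothTransition.contDiff.comp (by fun_prop)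

theorem cutoff_self (c : ℝ) : cutoff c c = 1 := by
  unfold cutoff
  split_ifs with hc
  · rfl
  · exact Real.smoothTransition.one_of_one_le (by rw [div_self hc]; norm_num)

theorem cutoff_nonneg (c t : ℝ) : 0 ≤ cutoff c t := by
  unfold cutoff
  split_ifs
  · exact zero_le_one
  · exact Real.smoothTransition.nonneg _

theorem cutoff_eq_zero {c t : ℝ} (hc : c ≠ 0) (ht : 2 * (t / c) ^ 2 ≤ 1) : cutoff c t = 0 := by
  rw [cutoff, if_neg hc]
  exact Real.smoothTransition.zero_of_nonpos (by linarith)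

def cutoffProd (ζ : ℕ → ℝ) (n : ℕ) (u : Fin n → ℝ) : ℝ := ∏ m : Fin n, cutoff (ζ m) (u m)

theorem contDiff_cutoffProd (ζ : ℕ → ℝ) (n : ℕ) : ContDiff ℝ ∞ (cutoffProd ζ n) :=
  contDiff_prod fun m _ => (contDiff_cutoff (ζ m)).comp (contDiff_apply ℝ ℝ m)

theorem cutoffProd_nonneg (ζ : ℕ → ℝ) (n : ℕ) (u : Fin n → ℝ) : 0 ≤ cutoffProd ζ n u :=
  Finset.prod_nonneg fun _ _ => cutoff_nonneg _ _

variable {ζ : ℕ → ℝ}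

theorem cutoffProd_eq_one {n : ℕ} {u : Fin n → ℝ} (hu : ∀ m, u m = ζ m) : cutoffProd ζ n u = 1 :=
  Finset.prod_eq_one fun m _ => by rw [hu, cutoff_self]

def coordProj (n : ℕ) : finSupportSubspace →L[ℝ] (Fin n → ℝ) :=
  ContinuousLinearMap.pi fun i => (lp.evalCLM ℝ (fun _ : ℕ => ℝ) 1 i).comp
    finSupportSubspace.subtypeL

def pathologicalFun (ζ : ℕ → ℝ) (x : finSupportSubspace) : ℝ :=
  ∑ᶠ n, cutoffProd ζ n (coordProj n x)

-- Near `x₀`, a coordinate `m` beyond the support of `x₀` with `ζ m ≠ 0` is small, so the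
-- factor `cutoff (ζ m)` kills all terms with `n > m`.
theorem locallyFinite_support_cutoffProd (hζ : ∃ᶠ m in atTop, ζ m ≠ 0) :
    LocallyFinite fun n =>
      support fun x : finSupportSubspace => cutoffProd ζ n (coordProj n x) := by
  intro x₀
  obtain ⟨N, hN⟩ := x₀.2
  obtain ⟨m, hNm, hm⟩ := frequently_atTop.1 hζ N
  have hcoord : Continuous fun x : finSupportSubspace => (x : ℓ¹) m :=
    (lp.evalCLM ℝ _ 1 m).continuous.comp continuous_subtype_val
  refine ⟨{x | 2 * ((x : ℓ¹) m / ζ m) ^ 2 < 1}, (isOpen_lt (by fun_prop) continuous_const).mem_nhds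
    (by simp [hN m hNm]), (finite_lt_nat (m + 1)).subset ?_⟩
  rintro n ⟨x, hx, hxU⟩
  by_contra hn
  exact hx (Finset.prod_eq_zero (Finset.mem_univ ⟨m, by simp at hn; omega⟩)
    (cutoff_eq_zero hm hxU.le))

theorem hasMBIteratedDeriv_pathologicalFun (hζ : ∃ᶠ m in atTop, ζ m ≠ 0) :
    HasMBIteratedDeriv (pathologicalFun ζ)
      fun k p => ∑ᶠ n, mbIteratedDerivComp (cutoffProd ζ n) (coordProj n) k p :=
  HasMBIteratedDeriv.finsum (fun n => (contDiff_cutoffProd ζ n).hasMBIteratedDeriv_comp _)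
    (locallyFinite_support_cutoffProd hζ)

theorem natCast_le_pathologicalFun (hζ : ∃ᶠ m in atTop, ζ m ≠ 0) {x : finSupportSubspace}
    {k : ℕ} (hx : ∀ m < k, (x : ℓ¹) m = ζ m) : (k : ℝ) ≤ pathologicalFun ζ x := by
  classical
  have hfin := (locallyFinite_support_cutoffProd hζ).point_finite x
  rw [pathologicalFun, finsum_eq_sum_of_support_subset _
    (s := hfin.toFinset ∪ Finset.range k) fun n hn => by simpa using Or.inl hn]
  calc (k : ℝ) = ∑ n ∈ Finset.range k, cutoffProd ζ n (coordProj n x) := by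
        rw [Finset.sum_congr rfl fun n hn =>
          cutoffProd_eq_one (u := coordProj n x) fun m => hx m (by simp at hn; omega)]
        simp
    _ ≤ _ := Finset.sum_le_sum_of_subset_of_nonneg Finset.subset_union_right
        fun n _ _ => cutoffProd_nonneg ζ n _

end Construction

theorem frequently_ne_zero_of_notMem {z : ℓ¹} (hz : z ∉ finSupportSubspace) :
    ∃ᶠ m in atTop, z m ≠ 0 := fun h =>
  hz (eventually_atTop.1 (h.mono fun _ => not_not.1))

noncomputable def truncate (z : ℓ¹) (k : ℕ) : ℓ¹ := ∑ m ∈ Finset.range k, lp.single 1 m (z m)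

theorem truncate_apply (z : ℓ¹) (k j : ℕ) : truncate z k j = if j < k then z j else 0 := by
  rw [truncate, lp.coeFn_sum, Finset.sum_apply]
  simp [lp.single_apply, Pi.single_apply]

theorem truncate_mem (z : ℓ¹) (k : ℕ) : truncate z k ∈ finSupportSubspace :=
  ⟨k, fun n hn => by simp [truncate_apply, not_lt.2 hn]⟩

theorem tendsto_truncate (z : ℓ¹) : Tendsto (truncate z) atTop (𝓝 z) :=
  (lp.hasSum_single ENNReal.one_ne_top z).tendsto_sum_nat

theorem not_forall_extension_eq_of_tendsto_atTop {X : Type*} [TopologicalSpace X] {S : Set X}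
    {z : X} {φ : S → ℝ} {u : ℕ → S} (hu : Tendsto (fun k => (u k : X)) atTop (𝓝 z))
    (hφ : Tendsto (φ ∘ u) atTop atTop) {g : ↥(S ∪ {z}) → ℝ} (hg : Continuous g) :
    ¬ ∀ x : S, g ⟨x, Or.inl x.2⟩ = φ x := fun hext => by
  have hlim : Tendsto (fun k => g ⟨u k, Or.inl (u k).2⟩) atTop (𝓝 (g ⟨z, Or.inr rfl⟩)) :=
    (hg.tendsto _).comp (tendsto_subtype_rng.2 hu)
  simp only [hext] at hlim
  exact not_tendsto_nhds_of_tendsto_atTop hφ _ hlim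

/-- There exists a complete locally convex space `F` and a smooth map
`f : E → F` from the dense subspace `E ⊆ ℓ¹` of eventually-zero sequences
which admits no continuous extension to `E ∪ {z}` for any `z ∈ ℓ¹ \ E`. -/
theorem exists_pathological_smooth_map : Nonempty PathologicalSmoothMap := by
  refine ⟨{ F := {z : ℓ¹ // z ∉ finSupportSubspace} → ℝ
            f := fun x z => pathologicalFun z.1 x
            smooth := fun n => (HasMBIteratedDeriv.pi fun z =>
              hasMBIteratedDeriv_pathologicalFun (frequently_ne_zero_of_notMem z.2)).contDiffMB n
            no_extension := ?_ }⟩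
  rintro z hz ⟨g, hg, hext⟩
  let zi : {z : ℓ¹ // z ∉ finSupportSubspace} := ⟨z, hz⟩
  refine not_forall_extension_eq_of_tendsto_atTop (φ := fun x => pathologicalFun z x)
    (u := fun k => ⟨truncate z k, truncate_mem z k⟩) (tendsto_truncate z) ?_
    ((continuous_apply zi).comp hg) fun x => congrFun (hext x) zi
  refine tendsto_atTop_mono (fun k => natCast_le_pathologicalFun
    (frequently_ne_zero_of_notMem hz) fun m hm => ?_) tendsto_natCast_atTop_atTop
  simp [truncate_apply, hm]
end

section
/- Let z = (zₙ) ∈ ℓ¹ have infinitely many nonzero entries, and for each n let hₙ : ℝ → ℝ be continuous with hₙ(zₙ) = 1. Let E ⊆ ℓ¹ be the space of eventually-zero sequences and define gₙ : E → ℝ by gₙ(x) = h₁(x₁)⋯hₙ(xₙ). Suppose hₙ vanishes on a neighbourhood of 0 whenever zₙ ≠ 0. Then there is no continuous map p : E ∪ {z} → ℓ¹ (with the ℓ¹ subspace topology on the domain) whose n-th coordinate restricted to E equals gₙ for all n. -/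
open Filter Topology

/-- Non-extendability: let `z ∈ ℓ¹` have infinitely many nonzero entries, and for each
`n` let `hₙ : ℝ → ℝ` be continuous with `hₙ(zₙ) = 1`, vanishing near `0` whenever
`zₙ ≠ 0`.  Let `E ⊆ ℓ¹` be the set of eventually-zero sequences and
`gₙ(x) = h₀(x₀)⋯hₙ(xₙ)`.  Then there is no continuous map `p : E ∪ {z} → ℓ¹` whose
`n`-th coordinate restricted to `E` equals `gₙ` for all `n`. -/
theorem no_continuous_extension_lp_one
    (z : lp (fun _ : ℕ => ℝ) 1) (hz : {n : ℕ | z n ≠ 0}.Infinite)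
    (h : ℕ → ℝ → ℝ) (hcont : ∀ n, Continuous (h n)) (hone : ∀ n, h n (z n) = 1)
    (hvanish : ∀ n, z n ≠ 0 → ∃ ε > 0, ∀ t : ℝ, |t| < ε → h n t = 0)
    :
    ¬∃ p : ({x : lp (fun _ : ℕ => ℝ) 1 | ∃ N, ∀ n ≥ N, x n = 0} ∪ {z} :
        Set (lp (fun _ : ℕ => ℝ) 1)) → lp (fun _ : ℕ => ℝ) 1,
      Continuous p ∧
      ∀ (x : lp (fun _ : ℕ => ℝ) 1) (hx : ∃ N, ∀ n ≥ N, x n = 0) (n : ℕ),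
        (p ⟨x, Or.inl hx⟩) n = ∏ i ∈ Finset.range (n + 1), h i (x i) := by
  rintro ⟨p, hpc, hpE⟩
  -- the summable sequence of norms of z
  have hzsum : Summable fun i => ‖z i‖ := by
    have := (lp.memℓp z).summable (p := 1) (by norm_num)
    simpa using this
  -- truncations
  have htruncmem : ∀ k : ℕ, Memℓp (fun i => if i < k then z i else 0) (1 : ENNReal) := by
    intro k
    apply memℓp_gen
    apply summable_of_ne_finset_zero (s := Finset.range k)
    intro i hi
    simp only [Finset.mem_range] at hi
    simp [hi, Real.zero_rpow]
  set y : ℕ → lp (fun _ : ℕ => ℝ) 1 := fun k => ⟨fun i => if i < k then z i else 0, htruncmem k⟩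
    with hy
  have hyE : ∀ k, ∃ N, ∀ n ≥ N, (y k) n = 0 := by
    intro k
    exact ⟨k, fun n hn => by simp [hy, Nat.not_lt.mpr hn]⟩
  -- y k → z in lp norm
  have hnorm : ∀ k, ‖y k - z‖ = ∑' i, ‖z (i + k)‖ := by
    intro k
    have h1 : ‖y k - z‖ = ∑' i, ‖(y k - z) i‖ := by
      have := lp.norm_eq_tsum_rpow (p := 1) (by norm_num) (y k - z)
      simpa using this
    have h2 : ∀ i, ‖(y k - z) i‖ = if i < k then 0 else ‖z i‖ := by
      intro i
      rw [lp.coeFn_sub, Pi.sub_apply]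
      by_cases hik : i < k <;> simp [hy, hik]
    rw [h1]
    have hgsum : Summable fun i => if i < k then 0 else ‖z i‖ := by
      apply Summable.of_nonneg_of_le (fun i => by positivity)
        (fun i => ?_) hzsum
      by_cases hik : i < k <;> simp [hik]
    have h3 := Summable.sum_add_tsum_nat_add (f := fun i => if i < k then 0 else ‖z i‖) k hgsum
    simp only [h2]
    rw [← h3]
    have h4 : ∑ i ∈ Finset.range k, (if i < k then 0 else ‖z i‖) = 0 := by
      apply Finset.sum_eq_zero
      intro i hi
      simp [Finset.mem_range.mp hi]
    rw [h4, zero_add]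
    congr 1
    funext i
    simp [Nat.not_lt.mpr (Nat.le_add_left k i)]
  have hyz : Tendsto y atTop (𝓝 z) := by
    rw [tendsto_iff_norm_sub_tendsto_zero]
    simp only [hnorm]
    exact tendsto_sum_nat_add fun i => ‖z i‖
  -- in the subtype
  set zE : ({x : lp (fun _ : ℕ => ℝ) 1 | ∃ N, ∀ n ≥ N, x n = 0} ∪ {z} :
      Set (lp (fun _ : ℕ => ℝ) 1)) := ⟨z, Or.inr rfl⟩ with hzE
  have hyzE : Tendsto (fun k => (⟨y k, Or.inl (hyE k)⟩ :
      ({x : lp (fun _ : ℕ => ℝ) 1 | ∃ N, ∀ n ≥ N, x n = 0} ∪ {z} :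
      Set (lp (fun _ : ℕ => ℝ) 1)))) atTop (𝓝 zE) := by
    rw [tendsto_subtype_rng]
    exact hyz
  have hp : Tendsto (fun k => p ⟨y k, Or.inl (hyE k)⟩) atTop (𝓝 (p zE)) :=
    (hpc.tendsto zE).comp hyzE
  -- coordinates converge
  have hcoord : ∀ n : ℕ, (p zE) n = 1 := by
    intro n
    have hc : Tendsto (fun k => (p ⟨y k, Or.inl (hyE k)⟩) n) atTop (𝓝 ((p zE) n)) := by
      rw [tendsto_iff_norm_sub_tendsto_zero]
      have hb : ∀ k, ‖(p ⟨y k, Or.inl (hyE k)⟩) n - (p zE) n‖ ≤ ‖p ⟨y k, Or.inl (hyE k)⟩ - p zE‖ := by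
        intro k
        have := lp.norm_apply_le_norm (p := 1) one_ne_zero (p ⟨y k, Or.inl (hyE k)⟩ - p zE) n
        simpa using this
      apply squeeze_zero (fun k => norm_nonneg _) hb
      rw [← tendsto_iff_norm_sub_tendsto_zero]
      exact hp
    have hev : ∀ᶠ k in atTop, (p ⟨y k, Or.inl (hyE k)⟩) n = 1 := by
      filter_upwards [eventually_ge_atTop (n + 1)] with k hk
      rw [hpE (y k) (hyE k) n]
      rw [Finset.prod_eq_one]
      intro i hi
      have hik : i < k := lt_of_lt_of_le (Finset.mem_range.mp hi) hk
      have : (y k) i = z i := by simp [hy, hik]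
      rw [this, hone]
    have : Tendsto (fun _ : ℕ => (1 : ℝ)) atTop (𝓝 ((p zE) n)) := hc.congr' hev
    exact tendsto_nhds_unique this tendsto_const_nhds
  -- contradiction: constant 1 sequence not summable
  have hsum : Summable fun n => ‖(p zE) n‖ := by
    have := (lp.memℓp (p zE)).summable (p := 1) (by norm_num)
    simpa using this
  have : Summable fun _ : ℕ => (1 : ℝ) := by
    simpa [hcoord] using hsum
  have h0 := this.tendsto_atTop_zero
  have := tendsto_nhds_unique h0 tendsto_const_nhds
  norm_num at this
end

section
/- Let (Eᵢ)_{i∈I} and (Fᵢ)_{i∈I} be families of locally convex real vector spaces with locally convex direct sums E = ⊕ᵢEᵢ and F = ⊕ᵢFᵢ, let Z be a finite-dimensional real vector space, V ⊆ Z open, and for each i let fᵢ : V × Eᵢ → Fᵢ be continuous and linear in the second argument. Then the map f : V × E → F, (x, (vᵢ)ᵢ) ↦ (fᵢ(x, vᵢ))ᵢ, is continuous. -/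
/-!
Fix `x₀ ∈ V` and a compact neighbourhood `K ⊆ V` of `x₀` (which exists since `Z` is
finite-dimensional). By the tube lemma, each `fᵢ(x, ·)` maps a `0`-neighbourhood `Qᵢ` into a
given neighbourhood, uniformly in `x ∈ K`. As `g(x, ·)` is linear, it then maps the absolutely
convex hull of `⋃ᵢ Qᵢ` into any given absolutely convex `0`-neighbourhood, uniformly in `x ∈ K`;
so `g(x, v) → 0` as `(x, v) → (x₀, 0)`. Continuity at `(x₀, v₀)` follows from
`g(x, v) = g(x, v - v₀) + g(x, v₀)`, where `x ↦ g(x, v₀)` is a finite sum of continuous maps.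
-/

open Filter Topology DirectSum Set

theorem DirectSum.lmap_eq_sum {R : Type*} [Semiring R] {I : Type*} [DecidableEq I]
    {E F : I → Type*} [∀ i, AddCommMonoid (E i)] [∀ i, Module R (E i)]
    [∀ i, AddCommMonoid (F i)] [∀ i, Module R (F i)] [∀ i (x : E i), Decidable (x ≠ 0)]
    (φ : ∀ i, E i →ₗ[R] F i) (v : ⨁ i, E i) :
    lmap φ v = ∑ i ∈ v.support, of F i (φ i (v i)) := by
  conv_lhs => rw [← sum_support_of v]
  simp only [map_sum, lmap_of]

theorem IsCompact.eventually_forall_mem_of_continuousAt {X Y W : Type*} [TopologicalSpace X]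
    [TopologicalSpace Y] [TopologicalSpace W] {f : X × Y → W} {K : Set X} (hK : IsCompact K)
    {y₀ : Y} {w₀ : W} (hf : ∀ x ∈ K, ContinuousAt f (x, y₀)) (hy₀ : ∀ x ∈ K, f (x, y₀) = w₀)
    {T : Set W} (hT : T ∈ 𝓝 w₀) : ∀ᶠ y in 𝓝 y₀, ∀ x ∈ K, f (x, y) ∈ T := by
  refine hK.eventually_forall_of_forall_eventually fun x hx => ?_
  have hfT : f ⁻¹' T ∈ 𝓝 (x, y₀) := (hf x hx).preimage_mem_nhds (hy₀ x hx ▸ hT)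
  exact (continuous_swap.continuousAt (x := (y₀, x))).preimage_mem_nhds hfT

theorem continuousWithinAt_prod_of_map_add {X M N : Type*} [TopologicalSpace X] [AddGroup M]
    [TopologicalSpace M] [IsTopologicalAddGroup M] [AddMonoid N] [TopologicalSpace N]
    [ContinuousAdd N] {G : X × M → N} {V : Set X} {x₀ : X} {v₀ : M}
    (hadd : ∀ x ∈ V, ∀ v w, G (x, v + w) = G (x, v) + G (x, w))
    (hv₀ : ContinuousWithinAt (fun x => G (x, v₀)) V x₀)
    (hzero : Tendsto G (𝓝[V ×ˢ univ] (x₀, 0)) (𝓝 0)) :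
    ContinuousWithinAt G (V ×ˢ univ) (x₀, v₀) := by
  have hshift : Tendsto (fun p : X × M => (p.1, p.2 - v₀)) (𝓝[V ×ˢ univ] (x₀, v₀))
      (𝓝[V ×ˢ univ] (x₀, 0)) := by
    have hc : ContinuousWithinAt (fun p : X × M => (p.1, p.2 - v₀)) (V ×ˢ univ) (x₀, v₀) :=
      (continuous_fst.prodMk (continuous_snd.sub continuous_const)).continuousWithinAt
    simpa using hc.tendsto_nhdsWithin (t := V ×ˢ univ) fun p hp => ⟨hp.1, trivial⟩
  have hfst : Tendsto Prod.fst (𝓝[V ×ˢ univ] (x₀, v₀)) (𝓝[V] x₀) :=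
    continuousWithinAt_fst.tendsto_nhdsWithin fun p hp => hp.1
  have hsum := (hzero.comp hshift).add (hv₀.tendsto.comp hfst)
  rw [zero_add] at hsum
  refine hsum.congr' ?_
  filter_upwards [self_mem_nhdsWithin] with p hp
  simp [← hadd p.1 hp.1]

theorem DirectSum.eventually_forall_mem_of_forall_of {I ι N : Type*} [DecidableEq I]
    {E : I → Type*} [∀ i, AddCommGroup (E i)] [∀ i, Module ℝ (E i)]
    [∀ i, TopologicalSpace (E i)] [TopologicalSpace (⨁ i, E i)]
    [AddCommGroup N] [Module ℝ N] [TopologicalSpace N] [LocallyConvexSpace ℝ N]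
    [ContinuousSMul ℝ N]
    (hhull : ∀ Q : ∀ i, Set (E i), (∀ i, Q i ∈ 𝓝 (0 : E i)) →
      convexHull ℝ (balancedHull ℝ (⋃ i, of E i '' Q i)) ∈ 𝓝 (0 : ⨁ i, E i))
    (G : ι → (⨁ i, E i) →ₗ[ℝ] N)
    (hG : ∀ i, ∀ W ∈ 𝓝 (0 : N), ∀ᶠ q in 𝓝 (0 : E i), ∀ k, G k (of E i q) ∈ W) :
    ∀ W ∈ 𝓝 (0 : N), ∀ᶠ v in 𝓝 (0 : ⨁ i, E i), ∀ k, G k v ∈ W := by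
  intro W hW
  obtain ⟨W₁, ⟨hW₁, hW₁abs⟩, hW₁W⟩ := (nhds_hasBasis_absConvex ℝ N).mem_iff.mp hW
  filter_upwards [hhull _ fun i => hG i W₁ hW₁] with v hv k
  have hk : AbsConvex ℝ (G k ⁻¹' W₁) :=
    ⟨hW₁abs.1.mulActionHom_preimage (G k).toMulActionHom, hW₁abs.2.linear_preimage _⟩
  have hsub : (⋃ i, of E i '' {q | ∀ k, G k (of E i q) ∈ W₁}) ⊆
      G k ⁻¹' W₁ := by
    rintro _ ⟨_, ⟨i, rfl⟩, q, hq, rfl⟩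
    exact hq k
  rw [← absConvexHull_eq_convexHull_balancedHull] at hv
  exact hW₁W (absConvexHull_min hsub hk hv)

theorem continuousOn_directSum_map_general {I : Type*} [DecidableEq I]
    {E F : I → Type*}
    [∀ i, AddCommGroup (E i)] [∀ i, Module ℝ (E i)] [∀ i, TopologicalSpace (E i)]
    [∀ i, AddCommGroup (F i)] [∀ i, Module ℝ (F i)] [∀ i, TopologicalSpace (F i)]
    {Z : Type*} [AddCommGroup Z] [Module ℝ Z] [TopologicalSpace Z]
    [IsTopologicalAddGroup Z] [ContinuousSMul ℝ Z] [FiniteDimensional ℝ Z]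
    [TopologicalSpace (⨁ i, E i)] [IsTopologicalAddGroup (⨁ i, E i)]
    [TopologicalSpace (⨁ i, F i)] [IsTopologicalAddGroup (⨁ i, F i)]
    [ContinuousSMul ℝ (⨁ i, F i)] [LocallyConvexSpace ℝ (⨁ i, F i)]
    (hinclF : ∀ i, Continuous fun w : F i => (DirectSum.of F i w : ⨁ i, F i))
    (hhull : ∀ Q : ∀ i, Set (E i), (∀ i, Q i ∈ 𝓝 (0 : E i)) →
      convexHull ℝ (balancedHull ℝ
        (⋃ i, (fun v : E i => (DirectSum.of E i v : ⨁ i, E i)) '' Q i)) ∈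
          𝓝 (0 : ⨁ i, E i))
    (V : Set Z) (hV : IsOpen V)
    (f : ∀ i, Z × E i → F i)
    (hfcont : ∀ i, ContinuousOn (f i) (V ×ˢ Set.univ))
    (hflin : ∀ i, ∀ x ∈ V, IsLinearMap ℝ fun v : E i => f i (x, v))
    (g : Z × (⨁ i, E i) → ⨁ i, F i)
    (hg : ∀ (p : Z × (⨁ i, E i)) (i : I), g p i = f i (p.1, p.2 i)) :
    ContinuousOn g (V ×ˢ Set.univ) := by
  classical
  have := LocallyCompactSpace.of_finiteDimensional_of_complete ℝ Z
  let Φ : ∀ x ∈ V, (⨁ i, E i) →ₗ[ℝ] ⨁ i, F i := fun x hx =>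
    lmap fun i => (hflin i x hx).mk'
  have hgΦ : ∀ x (hx : x ∈ V) v, g (x, v) = Φ x hx v := fun x hx v => by
    ext i
    rw [hg]
    rfl
  rintro ⟨x₀, v₀⟩ ⟨hx₀, -⟩
  refine continuousWithinAt_prod_of_map_add (fun x hx v w => by simp only [hgΦ x hx, map_add])
    ?_ ?_
  · have hsum : ContinuousOn (fun x => ∑ i ∈ v₀.support, of F i (f i (x, v₀ i))) V :=
      continuousOn_finsetSum _ fun i _ => (hinclF i).comp_continuousOn <|
        (hfcont i).comp (continuousOn_id.prodMk continuousOn_const) fun x hx => ⟨hx, trivial⟩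
    refine (hsum.congr fun x hx => ?_) x₀ hx₀
    rw [hgΦ x hx, lmap_eq_sum]
    rfl
  obtain ⟨K, hKnhds, hKV, hK⟩ := local_compact_nhds (hV.mem_nhds hx₀)
  have hsummand : ∀ i, ∀ W ∈ 𝓝 (0 : ⨁ i, F i),
      ∀ᶠ q in 𝓝 (0 : E i), ∀ x : K, Φ x (hKV x.2) (of E i q) ∈ W := by
    intro i W hW
    have hT : of F i ⁻¹' W ∈ 𝓝 (0 : F i) :=
      (hinclF i).continuousAt.preimage_mem_nhds (by simpa using hW)
    filter_upwards [hK.eventually_forall_mem_of_continuousAt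
      (fun x hx => (hfcont i).continuousAt (prod_mem_nhds (hV.mem_nhds (hKV hx)) univ_mem))
      (fun x hx => (hflin i x (hKV hx)).map_zero) hT] with q hq x
    simpa [Φ] using hq x x.2
  have hsmall := DirectSum.eventually_forall_mem_of_forall_of hhull _ hsummand
  refine tendsto_nhdsWithin_of_tendsto_nhds fun W hW => ?_
  rw [nhds_prod_eq, mem_map]
  filter_upwards [prod_mem_prod hKnhds (hsmall W hW)] with p ⟨hp1, hp2⟩
  show g (p.1, p.2) ∈ W
  rw [hgΦ _ (hKV hp1)]
  exact hp2 ⟨_, hp1⟩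

/-- Continuity of sums of parameter-dependent linear maps on locally convex direct
sums.  The locally convex direct sum topologies on `⨁ᵢ Eᵢ` and `⨁ᵢ Fᵢ` are
axiomatized: they are locally convex vector topologies making the inclusions
continuous, and on the domain side the absolutely convex hulls of unions `⋃ᵢ Qᵢ` of
`0`-neighbourhoods form a base of `0`-neighbourhoods.  If `Z` is finite-dimensional,
`V ⊆ Z` is open and each `fᵢ : V × Eᵢ → Fᵢ` is continuous and linear in its second
argument, then `f : V × ⨁ᵢEᵢ → ⨁ᵢFᵢ`, `(x,(vᵢ)ᵢ) ↦ (fᵢ(x,vᵢ))ᵢ`, is continuous. -/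
theorem continuousOn_directSum_map {I : Type*} [DecidableEq I]
    {E F : I → Type*}
    [∀ i, AddCommGroup (E i)] [∀ i, Module ℝ (E i)] [∀ i, TopologicalSpace (E i)]
    [∀ i, IsTopologicalAddGroup (E i)] [∀ i, ContinuousSMul ℝ (E i)]
    [∀ i, LocallyConvexSpace ℝ (E i)]
    [∀ i, AddCommGroup (F i)] [∀ i, Module ℝ (F i)] [∀ i, TopologicalSpace (F i)]
    [∀ i, IsTopologicalAddGroup (F i)] [∀ i, ContinuousSMul ℝ (F i)]
    [∀ i, LocallyConvexSpace ℝ (F i)]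
    {Z : Type*} [AddCommGroup Z] [Module ℝ Z] [TopologicalSpace Z]
    [IsTopologicalAddGroup Z] [ContinuousSMul ℝ Z] [T2Space Z] [FiniteDimensional ℝ Z]
    [TopologicalSpace (⨁ i, E i)] [IsTopologicalAddGroup (⨁ i, E i)]
    [ContinuousSMul ℝ (⨁ i, E i)] [LocallyConvexSpace ℝ (⨁ i, E i)]
    [TopologicalSpace (⨁ i, F i)] [IsTopologicalAddGroup (⨁ i, F i)]
    [ContinuousSMul ℝ (⨁ i, F i)] [LocallyConvexSpace ℝ (⨁ i, F i)]
    (hinclE : ∀ i, Continuous fun v : E i => (DirectSum.of E i v : ⨁ i, E i))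
    (hinclF : ∀ i, Continuous fun w : F i => (DirectSum.of F i w : ⨁ i, F i))
    (hhull : ∀ Q : ∀ i, Set (E i), (∀ i, Q i ∈ 𝓝 (0 : E i)) →
      convexHull ℝ (balancedHull ℝ
        (⋃ i, (fun v : E i => (DirectSum.of E i v : ⨁ i, E i)) '' Q i)) ∈
          𝓝 (0 : ⨁ i, E i))
    (hbase : ∀ S ∈ 𝓝 (0 : ⨁ i, E i), ∃ Q : ∀ i, Set (E i),
      (∀ i, Q i ∈ 𝓝 (0 : E i)) ∧
      convexHull ℝ (balancedHull ℝ
        (⋃ i, (fun v : E i => (DirectSum.of E i v : ⨁ i, E i)) '' Q i)) ⊆ S)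
    (V : Set Z) (hV : IsOpen V)
    (f : ∀ i, Z × E i → F i)
    (hfcont : ∀ i, ContinuousOn (f i) (V ×ˢ Set.univ))
    (hflin : ∀ i, ∀ x ∈ V, IsLinearMap ℝ fun v : E i => f i (x, v))
    (g : Z × (⨁ i, E i) → ⨁ i, F i)
    (hg : ∀ (p : Z × (⨁ i, E i)) (i : I), g p i = f i (p.1, p.2 i)) :
    ContinuousOn g (V ×ˢ Set.univ) :=
  continuousOn_directSum_map_general hinclF hhull V hV f hfcont hflin g hg
end
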